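/- arXiv:1110.2316 — 6 statements merged into one kernel-verified Lean document; each statement's English description precedes it below -/
import Mathlib

section
/- Let 0 < φ₀ < π/2, ρᵥ > 0 and βᵥ ∈ (0,1/2). Let Ωᵛ = {x ∈ ℝ³ : 0 < |x| < ρᵥ and φ₀ < arccos(x₃/|x|) < π − φ₀}. Let w be a smooth real-valued function on Ωᵛ, let w_v ∈ ℝ, and suppose there are constants C ≥ 0 and d ≥ 1 such that for every multi-index α, |D^α(w − w_v)(x)| ≤ C · d^{|α|} · α! · |x|^{1/2 − βᵥ − |α|} for all x ∈ Ωᵛ. Define W(φ,θ,χ) := w(e^χ sin φ cos θ, e^χ sin φ sin θ, e^χ cos φ). Then there exist constants C₁, d₁ > 0 such that for every integer m ≥ 1 and every real ν with 0 < ν ≤ ρᵥ, ∫_{(φ,θ,χ) ∈ (φ₀, π−φ₀) × (−π,π) × (−∞, ln ν)} e^χ · Σ_{|α| ≤ m} |D^α_{(φ,θ,χ)}(W − w_v)|² dφ dθ dχ ≤ C₁ (d₁^m · m!)² · ν^{1 − 2βᵥ}. (This is Proposition 2.2.1, the differentiability estimate in modified spherical coordinates in a vertex neighbourhood, stated with the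 pointwise hypothesis defining the countably normed class C²_{βᵥ}.) -/
open MeasureTheory

/-- First-order partial derivative in direction `i` of a function on `ℝ³`. -/
noncomputable def pd (i : Fin 3) (f : (Fin 3 → ℝ) → ℝ) : (Fin 3 → ℝ) → ℝ :=
  fun x => fderiv ℝ f x (Pi.single i 1)

/-- Iterated partial derivative `D^α` for the multi-index `α = (a,b,c)`. -/
noncomputable def Dop (a b c : ℕ) (f : (Fin 3 → ℝ) → ℝ) : (Fin 3 → ℝ) → ℝ :=
  (pd 0)^[a] ((pd 1)^[b] ((pd 2)^[c] f))

/-- All multi-indices `α = (a,b,c)` with `|α| = a + b + c ≤ m`. -/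
def mIdx (m : ℕ) : Finset (ℕ × ℕ × ℕ) :=
  (Finset.range (m + 1) ×ˢ Finset.range (m + 1) ×ˢ Finset.range (m + 1)).filter
    (fun α => α.1 + α.2.1 + α.2.2 ≤ m)

/-- Euclidean norm `|x|` on `ℝ³`. -/
noncomputable def rad3 (x : Fin 3 → ℝ) : ℝ := Real.sqrt (x 0 ^ 2 + x 1 ^ 2 + x 2 ^ 2)

/-- Distance to the `x₃`-axis, `r(x) = √(x₁² + x₂²)`. -/
noncomputable def rad2of3 (x : Fin 3 → ℝ) : ℝ := Real.sqrt (x 0 ^ 2 + x 1 ^ 2)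

/-!
Write `W - w_v = u ∘ E` with `u = w - w_v` and `E(φ, θ, χ) = e^χ (sin φ cos θ, sin φ sin θ, cos φ)`.
Every component of `E` is `e^χ` times a product of trigonometric functions, so all its partial
derivatives are bounded by `e^χ = |E|`. Iterating the chain and product rules, `∂^γ (u ∘ E)` is a
sum of terms `(∂^δ u) ∘ E · f₁ ⋯ f_{|δ|}` with each `fₖ` a partial derivative of a component of
`E`. The hypothesis bounds such a term by `C d^{|δ|} |δ|! e^{(1/2 - β_v - |δ|) χ} e^{|δ| χ}`, and
counting the terms with weight `d^k k!` gives
`|∂^γ (W - w_v)| ≤ C (3d+1)^{|γ|} |γ|! e^{(1/2 - β_v) χ}`. Squaring, multiplying by `e^χ` and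
integrating over `χ < ln ν` produces the factor `ν^{2 - 2β_v} / (2 - 2β_v) ≤ ρ_v ν^{1 - 2β_v}`.
-/

open Set Filter Topology
open scoped ContDiff Nat

local notation "ℝ³" => Fin 3 → ℝ

section PartialDerivatives

variable {Ω : Set ℝ³} {f g u : ℝ³ → ℝ} {x : ℝ³}

theorem pd_congr_of_eqOn (hΩ : IsOpen Ω) (h : EqOn f g Ω) (hx : x ∈ Ω) (i : Fin 3) :
    pd i f x = pd i g x := by
  rw [pd, pd, (eventuallyEq_of_mem (hΩ.mem_nhds hx) h).fderiv_eq]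

theorem pd_const (i : Fin 3) (c : ℝ) : pd i (fun _ => c) = 0 := by
  ext; simp [pd]

theorem pd_add (hf : DifferentiableAt ℝ f x) (hg : DifferentiableAt ℝ g x) (i : Fin 3) :
    pd i (fun p => f p + g p) x = pd i f x + pd i g x := by
  simp [pd, fderiv_fun_add hf hg]

theorem pd_mul (hf : DifferentiableAt ℝ f x) (hg : DifferentiableAt ℝ g x) (i : Fin 3) :
    pd i (fun p => f p * g p) x = pd i f x * g x + f x * pd i g x := by
  simp only [pd, fderiv_fun_mul hf hg, add_apply, smul_apply, smul_eq_mul]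
  ring

theorem differentiableAt_list_sum {α : Type*} {l : List α} {F : α → ℝ³ → ℝ}
    (h : ∀ a ∈ l, DifferentiableAt ℝ (F a) x) :
    DifferentiableAt ℝ (fun p => (l.map (F · p)).sum) x := by
  induction l with
  | nil => simp
  | cons a l ih =>
    simp only [List.forall_mem_cons] at h
    simp only [List.map_cons, List.sum_cons]
    exact h.1.add (ih h.2)

theorem differentiableAt_list_prod {α : Type*} {l : List α} {F : α → ℝ³ → ℝ}
    (h : ∀ a ∈ l, DifferentiableAt ℝ (F a) x) :
    DifferentiableAt ℝ (fun p => (l.map (F · p)).prod) x := by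
  induction l with
  | nil => simp
  | cons a l ih =>
    simp only [List.forall_mem_cons] at h
    simp only [List.map_cons, List.prod_cons]
    exact h.1.mul (ih h.2)

theorem pd_list_sum {α : Type*} {l : List α} {F : α → ℝ³ → ℝ}
    (h : ∀ a ∈ l, DifferentiableAt ℝ (F a) x) (i : Fin 3) :
    pd i (fun p => (l.map (F · p)).sum) x = (l.map (fun a => pd i (F a) x)).sum := by
  induction l with
  | nil => simp [pd_const]
  | cons a l ih =>
    simp only [List.forall_mem_cons] at h
    simp only [List.map_cons, List.sum_cons]
    rw [pd_add h.1 (differentiableAt_list_sum h.2), ih h.2]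

theorem pd_comp_eval {g : ℝ → ℝ} {j : Fin 3} (hg : DifferentiableAt ℝ g (x j)) (i : Fin 3) :
    pd i (fun p => g (p j)) x = if i = j then deriv g (x j) else 0 := by
  have h := hg.hasDerivAt.comp_hasFDerivAt x (hasFDerivAt_apply (𝕜 := ℝ) j x)
  rw [pd, show (fun p : ℝ³ => g (p j)) = g ∘ fun p => p j from rfl, h.fderiv]
  by_cases hij : i = j <;> simp [hij]

theorem pd_comp {E : ℝ³ → ℝ³} (hg : DifferentiableAt ℝ g (E x)) (hE : DifferentiableAt ℝ E x)
    (i : Fin 3) :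
    pd i (fun q => g (E q)) x = ∑ j, pd j g (E x) * pd i (fun q => E q j) x := by
  have hEj : ∀ j, DifferentiableAt ℝ (fun q => E q j) x := fun j => differentiableAt_pi.1 hE j
  rw [pd, fderiv_fun_comp x hg hE, ContinuousLinearMap.comp_apply, fderiv_pi hEj]
  conv_lhs => rw [pi_eq_sum_univ' (ContinuousLinearMap.pi (fun j => fderiv ℝ (E · j) x)
    (Pi.single i 1)), map_sum]
  simp [pd, mul_comm]

theorem contDiffOn_pd (hΩ : IsOpen Ω) (hf : ContDiffOn ℝ ∞ f Ω) (i : Fin 3) :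
    ContDiffOn ℝ ∞ (pd i f) Ω :=
  (hf.fderiv_of_isOpen hΩ (by simp)).clm_apply contDiffOn_const

theorem contDiffOn_foldr_pd (hΩ : IsOpen Ω) (hf : ContDiffOn ℝ ∞ f Ω) (ws : List (Fin 3)) :
    ContDiffOn ℝ ∞ (ws.foldr pd f) Ω := by
  induction ws with
  | nil => exact hf
  | cons i ws ih => exact contDiffOn_pd hΩ ih i

theorem differentiableAt_foldr_pd (hΩ : IsOpen Ω) (hf : ContDiffOn ℝ ∞ f Ω) (ws : List (Fin 3))
    (hx : x ∈ Ω) : DifferentiableAt ℝ (ws.foldr pd f) x :=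
  ((contDiffOn_foldr_pd hΩ hf ws).differentiableOn (by simp)).differentiableAt (hΩ.mem_nhds hx)

theorem pd_comm (hΩ : IsOpen Ω) (hf : ContDiffOn ℝ ∞ f Ω) (hx : x ∈ Ω) (i j : Fin 3) :
    pd i (pd j f) x = pd j (pd i f) x := by
  have hf' : ContDiffOn ℝ ∞ (fderiv ℝ f) Ω := hf.fderiv_of_isOpen hΩ (by simp)
  have hd : DifferentiableAt ℝ (fderiv ℝ f) x :=
    (hf'.differentiableOn (by simp)).differentiableAt (hΩ.mem_nhds hx)
  have hev : ∀ᶠ y in 𝓝 x, HasFDerivAt f (fderiv ℝ f y) y := by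
    filter_upwards [hΩ.mem_nhds hx] with y hy
    exact ((hf.differentiableOn (by simp)).differentiableAt (hΩ.mem_nhds hy)).hasFDerivAt
  have hsymm := second_derivative_symmetric_of_eventually hev hd.hasFDerivAt
  have hpd2 : ∀ k l : Fin 3,
      pd k (pd l f) x = fderiv ℝ (fderiv ℝ f) x (Pi.single k 1) (Pi.single l 1) := fun k l => by
    rw [pd, show pd l f = fun y => fderiv ℝ f y (Pi.single l 1) from rfl,
      fderiv_clm_apply hd (differentiableAt_const _)]
    simp
  rw [hpd2, hpd2, hsymm]

theorem foldr_pd_perm (hΩ : IsOpen Ω) (hu : ContDiffOn ℝ ∞ u Ω) {ws ws' : List (Fin 3)}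
    (h : ws.Perm ws') : EqOn (ws.foldr pd u) (ws'.foldr pd u) Ω := by
  induction h with
  | nil => exact fun _ _ => rfl
  | cons i _ ih => exact fun x hx => pd_congr_of_eqOn hΩ ih hx i
  | swap i j ws => exact fun x hx => pd_comm hΩ (contDiffOn_foldr_pd hΩ hu ws) hx j i
  | trans _ _ ih₁ ih₂ => exact fun x hx => (ih₁ hx).trans (ih₂ hx)

theorem foldr_pd_replicate (n : ℕ) (i : Fin 3) (f : ℝ³ → ℝ) :
    (List.replicate n i).foldr pd f = (pd i)^[n] f := by
  induction n with
  | zero => rfl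
  | succ n ih => rw [List.replicate_succ, List.foldr_cons, ih, Function.iterate_succ_apply']

theorem Dop_eq_foldr (a b c : ℕ) (f : ℝ³ → ℝ) :
    Dop a b c f =
      (List.replicate a (0 : Fin 3) ++ List.replicate b 1 ++ List.replicate c 2).foldr pd f := by
  simp only [Dop, List.foldr_append, foldr_pd_replicate]

theorem foldr_pd_eq_Dop (hΩ : IsOpen Ω) (hu : ContDiffOn ℝ ∞ u Ω) (ws : List (Fin 3)) :
    EqOn (ws.foldr pd u) (Dop (ws.count 0) (ws.count 1) (ws.count 2) u) Ω := by
  rw [Dop_eq_foldr]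
  refine foldr_pd_perm hΩ hu (List.perm_iff_count.2 fun k => ?_)
  fin_cases k <;> simp [List.count_replicate]

end PartialDerivatives

section Factors

def PartialsBoundedBy (r f : ℝ³ → ℝ) : Prop :=
  ∀ ws : List (Fin 3), Differentiable ℝ (ws.foldr pd f) ∧ ∀ p, |ws.foldr pd f p| ≤ r p

theorem PartialsBoundedBy.pd {r f : ℝ³ → ℝ} (h : PartialsBoundedBy r f) (i : Fin 3) :
    PartialsBoundedBy r (pd i f) := fun ws => by
  simpa [List.foldr_append] using h (ws ++ [i])

theorem differentiable_iteratedDeriv_of_contDiff {a : ℝ → ℝ} (ha : ContDiff ℝ ∞ a) (n : ℕ) :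
    Differentiable ℝ (iteratedDeriv n a) :=
  ha.differentiable_iteratedDeriv n (mod_cast ENat.natCast_lt_top n)

noncomputable def sepExp (a b : ℝ → ℝ) (p : ℝ³) : ℝ := a (p 0) * b (p 1) * Real.exp (p 2)

theorem pd_sepExp {a b : ℝ → ℝ} (ha : Differentiable ℝ a) (hb : Differentiable ℝ b)
    (i : Fin 3) (x : ℝ³) :
    pd i (sepExp a b) x =
      sepExp (if i = 0 then deriv a else a) (if i = 1 then deriv b else b) x := by
  have hexp : DifferentiableAt ℝ Real.exp (x 2) := Real.differentiableAt_exp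
  have ha' : DifferentiableAt ℝ (fun p : ℝ³ => a (p 0)) x := by fun_prop
  have hb' : DifferentiableAt ℝ (fun p : ℝ³ => b (p 1)) x := by fun_prop
  have he' : DifferentiableAt ℝ (fun p : ℝ³ => Real.exp (p 2)) x := by fun_prop
  rw [show sepExp a b = fun p => a (p 0) * b (p 1) * Real.exp (p 2) from rfl,
    pd_mul (ha'.fun_mul hb') he', pd_mul ha' hb',
    pd_comp_eval (ha _), pd_comp_eval (hb _), pd_comp_eval hexp]
  fin_cases i <;> simp [sepExp]

theorem foldr_pd_sepExp {a b : ℝ → ℝ} (ha : ContDiff ℝ ∞ a) (hb : ContDiff ℝ ∞ b)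
    (ws : List (Fin 3)) :
    ws.foldr pd (sepExp a b) =
      sepExp (iteratedDeriv (ws.count 0) a) (iteratedDeriv (ws.count 1) b) := by
  induction ws with
  | nil => simp
  | cons i ws ih =>
    ext x
    rw [List.foldr_cons, ih, pd_sepExp (differentiable_iteratedDeriv_of_contDiff ha _)
      (differentiable_iteratedDeriv_of_contDiff hb _)]
    fin_cases i <;> simp [iteratedDeriv_succ]

theorem partialsBoundedBy_sepExp {a b : ℝ → ℝ} (ha : ContDiff ℝ ∞ a) (hb : ContDiff ℝ ∞ b)
    (ha₁ : ∀ n x, |iteratedDeriv n a x| ≤ 1) (hb₁ : ∀ n x, |iteratedDeriv n b x| ≤ 1) :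
    PartialsBoundedBy (fun p => Real.exp (p 2)) (sepExp a b) := by
  intro ws
  rw [foldr_pd_sepExp ha hb]
  refine ⟨?_, fun p => ?_⟩
  · have ha' := differentiable_iteratedDeriv_of_contDiff ha (ws.count 0)
    have hb' := differentiable_iteratedDeriv_of_contDiff hb (ws.count 1)
    unfold sepExp
    fun_prop
  · rw [sepExp, abs_mul, abs_mul, Real.abs_exp]
    exact mul_le_of_le_one_left (Real.exp_pos _).le
      (mul_le_one₀ (ha₁ _ _) (abs_nonneg _) (hb₁ _ _))

end Factors

section ChainExpansion

/-- A term of the expansion of a derivative of `u ∘ E`: the list of pairs `(jₖ, fₖ)` stands for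
`(∂_{j₁} ⋯ ∂_{jₙ} u) ∘ E · f₁ ⋯ fₙ`. -/
abbrev ChainTerm := List (Fin 3 × (ℝ³ → ℝ))

noncomputable def ChainTerm.eval (u : ℝ³ → ℝ) (E : ℝ³ → ℝ³) (T : ChainTerm) (p : ℝ³) : ℝ :=
  (T.map Prod.fst).foldr pd u (E p) * (T.map (·.2 p)).prod

noncomputable def ChainTerm.pdFactors (i : Fin 3) : ChainTerm → List ChainTerm
  | [] => []
  | (j, f) :: T => ((j, pd i f) :: T) :: (pdFactors i T).map ((j, f) :: ·)

noncomputable def ChainTerm.pdTerms (E : ℝ³ → ℝ³) (i : Fin 3) (T : ChainTerm) : List ChainTerm :=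
  (List.finRange 3).map (fun j => (j, pd i (E · j)) :: T) ++ T.pdFactors i

noncomputable def chainExpansion (E : ℝ³ → ℝ³) : List (Fin 3) → List ChainTerm
  | [] => [[]]
  | i :: ws => (chainExpansion E ws).flatMap (ChainTerm.pdTerms E i)

namespace ChainTerm

variable {u : ℝ³ → ℝ} {E : ℝ³ → ℝ³} {i : Fin 3} {T T' : ChainTerm}

theorem map_fst_of_mem_pdFactors (h : T' ∈ T.pdFactors i) :
    T'.map Prod.fst = T.map Prod.fst := by
  induction T generalizing T' with
  | nil => simp [pdFactors] at h
  | cons x T ih =>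
    simp only [pdFactors, List.mem_cons, List.mem_map] at h
    rcases h with rfl | ⟨T'', h, rfl⟩
    · simp
    · simp [ih h]

theorem forall_of_mem_pdFactors {P : (ℝ³ → ℝ) → Prop} (hP : ∀ f, P f → P (pd i f))
    (hT : ∀ x ∈ T, P x.2) (h : T' ∈ T.pdFactors i) : ∀ x ∈ T', P x.2 := by
  induction T generalizing T' with
  | nil => simp [pdFactors] at h
  | cons x T ih =>
    simp only [List.forall_mem_cons] at hT
    simp only [pdFactors, List.mem_cons, List.mem_map] at h
    rcases h with rfl | ⟨T'', h, rfl⟩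
    · exact List.forall_mem_cons.2 ⟨hP _ hT.1, hT.2⟩
    · exact List.forall_mem_cons.2 ⟨hT.1, ih hT.2 h⟩

theorem pd_prod {p : ℝ³} (hT : ∀ x ∈ T, DifferentiableAt ℝ x.2 p) :
    pd i (fun q => (T.map (·.2 q)).prod) p =
      ((T.pdFactors i).map fun T' => (T'.map (·.2 p)).prod).sum := by
  induction T with
  | nil => simp [pd_const, pdFactors]
  | cons x T ih =>
    simp only [List.forall_mem_cons] at hT
    simp only [List.map_cons, List.prod_cons, pdFactors, List.sum_cons, List.map_map]
    rw [pd_mul hT.1 (differentiableAt_list_prod hT.2), ih hT.2, ← List.sum_map_mul_left]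
    rfl

variable {Ω : Set ℝ³} {p : ℝ³}

theorem differentiableAt_eval (hΩ : IsOpen Ω) (hu : ContDiffOn ℝ ∞ u Ω) (hp : E p ∈ Ω)
    (hE : DifferentiableAt ℝ E p) (hT : ∀ x ∈ T, DifferentiableAt ℝ x.2 p) :
    DifferentiableAt ℝ (T.eval u E) p :=
  ((differentiableAt_foldr_pd hΩ hu _ hp).comp p hE).mul (differentiableAt_list_prod hT)

theorem pd_eval (hΩ : IsOpen Ω) (hu : ContDiffOn ℝ ∞ u Ω) (hp : E p ∈ Ω)
    (hE : DifferentiableAt ℝ E p) (hT : ∀ x ∈ T, DifferentiableAt ℝ x.2 p) (i : Fin 3) :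
    pd i (T.eval u E) p = ((T.pdTerms E i).map (·.eval u E p)).sum := by
  set G := (T.map Prod.fst).foldr pd u
  have hG : DifferentiableAt ℝ G (E p) := differentiableAt_foldr_pd hΩ hu _ hp
  have hGE : DifferentiableAt ℝ (fun q => G (E q)) p := hG.comp p hE
  have hfac : ∀ T' ∈ T.pdFactors i, T'.eval u E p = G (E p) * (T'.map (·.2 p)).prod :=
    fun T' h => by rw [eval, map_fst_of_mem_pdFactors h]
  rw [show T.eval u E = fun q => G (E q) * (T.map (·.2 q)).prod from rfl,
    pd_mul hGE (differentiableAt_list_prod hT), pd_comp hG hE, pd_prod hT,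
    pdTerms, List.map_append, List.sum_append, List.map_congr_left hfac, List.sum_map_mul_left,
    Fin.sum_univ_def, ← List.sum_map_mul_right, List.map_map]
  congr 2
  ext j
  simp [eval, G, mul_assoc]

theorem length_of_mem_pdFactors (h : T' ∈ T.pdFactors i) : T'.length = T.length := by
  simpa using congrArg List.length (map_fst_of_mem_pdFactors h)

theorem length_pdFactors (i : Fin 3) (T : ChainTerm) : (T.pdFactors i).length = T.length := by
  induction T with
  | nil => rfl
  | cons x T ih => simp [pdFactors, ih]

end ChainTerm

variable {u : ℝ³ → ℝ} {E : ℝ³ → ℝ³} {r : ℝ³ → ℝ} {Ω U : Set ℝ³}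

theorem length_le_of_mem_chainExpansion {ws : List (Fin 3)} {T : ChainTerm}
    (hT : T ∈ chainExpansion E ws) : T.length ≤ ws.length := by
  induction ws generalizing T with
  | nil => simp_all [chainExpansion]
  | cons i ws ih =>
    simp only [chainExpansion, List.mem_flatMap, ChainTerm.pdTerms, List.mem_append,
      List.mem_map, List.mem_finRange, true_and] at hT
    obtain ⟨T₀, hT₀, ⟨j, rfl⟩ | hT⟩ := hT
    · simpa using ih hT₀
    · rw [ChainTerm.length_of_mem_pdFactors hT, List.length_cons]
      exact (ih hT₀).trans (Nat.le_succ _)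

theorem partialsBoundedBy_of_mem_chainExpansion (hE : ∀ j, PartialsBoundedBy r (E · j))
    {ws : List (Fin 3)} {T : ChainTerm} (hT : T ∈ chainExpansion E ws) :
    ∀ x ∈ T, PartialsBoundedBy r x.2 := by
  induction ws generalizing T with
  | nil => simp_all [chainExpansion]
  | cons i ws ih =>
    simp only [chainExpansion, List.mem_flatMap, ChainTerm.pdTerms, List.mem_append,
      List.mem_map, List.mem_finRange, true_and] at hT
    obtain ⟨T₀, hT₀, ⟨j, rfl⟩ | hT⟩ := hT
    · exact List.forall_mem_cons.2 ⟨(hE j).pd i, ih hT₀⟩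
    · exact ChainTerm.forall_of_mem_pdFactors (fun f hf => hf.pd i) (ih hT₀) hT

theorem foldr_pd_comp_eq_sum_chainExpansion (hΩ : IsOpen Ω) (hU : IsOpen U)
    (hu : ContDiffOn ℝ ∞ u Ω) (hE : ∀ j, PartialsBoundedBy r (E · j)) (hEU : MapsTo E U Ω)
    (ws : List (Fin 3)) :
    EqOn (ws.foldr pd (fun q => u (E q)))
      (fun p => ((chainExpansion E ws).map (·.eval u E p)).sum) U := by
  have hEd : Differentiable ℝ E := differentiable_pi.2 fun j => (hE j []).1
  have hdiff : ∀ ws, ∀ T ∈ chainExpansion E ws, ∀ x ∈ T, Differentiable ℝ x.2 :=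
    fun ws T hT x hx => (partialsBoundedBy_of_mem_chainExpansion hE hT x hx []).1
  induction ws with
  | nil => intro p _; simp [chainExpansion, ChainTerm.eval]
  | cons i ws ih =>
    intro p hp
    rw [List.foldr_cons, pd_congr_of_eqOn hU ih hp,
      pd_list_sum fun T hT => ChainTerm.differentiableAt_eval hΩ hu (hEU hp) (hEd p)
        fun x hx => hdiff ws T hT x hx p]
    simp only [chainExpansion, List.flatMap_def, List.map_flatten, List.sum_flatten, List.map_map]
    congr 1
    refine List.map_congr_left fun T hT => ?_
    exact ChainTerm.pd_eval hΩ hu (hEU hp) (hEd p) (fun x hx => hdiff ws T hT x hx p) i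

def ChainTerm.weight (d : ℝ) (T : ChainTerm) : ℝ := d ^ T.length * T.length !

theorem ChainTerm.sum_weight_pdTerms (d : ℝ) (i : Fin 3) (T : ChainTerm) :
    ((T.pdTerms E i).map (weight d)).sum =
      (3 * d * (T.length + 1) + T.length) * weight d T := by
  have hfac : ∀ T' ∈ T.pdFactors i, weight d T' = weight d T := fun T' h => by
    rw [weight, weight, length_of_mem_pdFactors h]
  rw [pdTerms, List.map_append, List.sum_append, List.map_congr_left hfac, List.map_const',
    List.sum_replicate, length_pdFactors, List.map_map]
  simp only [Function.comp_def, weight, List.length_cons, List.map_const', List.sum_replicate,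
    List.length_finRange, nsmul_eq_mul, Nat.factorial_succ]
  push_cast
  ring

theorem sum_weight_chainExpansion_le {d : ℝ} (hd : 0 ≤ d) (ws : List (Fin 3)) :
    ((chainExpansion E ws).map (ChainTerm.weight d)).sum ≤
      (3 * d + 1) ^ ws.length * ws.length ! := by
  induction ws with
  | nil => simp [chainExpansion, ChainTerm.weight]
  | cons i ws ih =>
    have hstep : ∀ T ∈ chainExpansion E ws, ((T.pdTerms E i).map (ChainTerm.weight d)).sum ≤
        (3 * d + 1) * (ws.length + 1) * T.weight d := fun T hT => by
      have hk : (T.length : ℝ) ≤ ws.length := by exact_mod_cast length_le_of_mem_chainExpansion hT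
      rw [ChainTerm.sum_weight_pdTerms]
      exact mul_le_mul_of_nonneg_right (by nlinarith) (by unfold ChainTerm.weight; positivity)
    calc ((chainExpansion E (i :: ws)).map (ChainTerm.weight d)).sum
        = ((chainExpansion E ws).map
            fun T => ((T.pdTerms E i).map (ChainTerm.weight d)).sum).sum := by
          simp only [chainExpansion, List.flatMap_def, List.map_flatten, List.sum_flatten,
            List.map_map]
          rfl
      _ ≤ ((chainExpansion E ws).map fun T => (3 * d + 1) * (ws.length + 1) * T.weight d).sum :=
          List.sum_le_sum hstep
      _ ≤ (3 * d + 1) * (ws.length + 1) * ((3 * d + 1) ^ ws.length * ws.length !) := by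
          rw [List.sum_map_mul_left]
          exact mul_le_mul_of_nonneg_left ih (by positivity)
      _ = (3 * d + 1) ^ (i :: ws).length * (i :: ws).length ! := by
          simp only [List.length_cons, pow_succ, Nat.factorial_succ]
          push_cast
          ring

end ChainExpansion

section Estimate

variable {u : ℝ³ → ℝ} {E : ℝ³ → ℝ³} {r : ℝ³ → ℝ} {Ω U : Set ℝ³}

theorem abs_list_sum_le {α : Type*} {l : List α} {f g : α → ℝ} (h : ∀ a ∈ l, |f a| ≤ g a) :
    |(l.map f).sum| ≤ (l.map g).sum := by
  induction l with
  | nil => simp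
  | cons a l ih =>
    simp only [List.forall_mem_cons] at h
    simp only [List.map_cons, List.sum_cons]
    exact (abs_add_le _ _).trans (add_le_add h.1 (ih h.2))

theorem abs_list_prod_le_pow {l : List ℝ} {r : ℝ} (h : ∀ a ∈ l, |a| ≤ r) :
    |l.prod| ≤ r ^ l.length := by
  induction l with
  | nil => simp
  | cons a l ih =>
    simp only [List.forall_mem_cons] at h
    rw [List.prod_cons, abs_mul, List.length_cons, pow_succ']
    exact mul_le_mul h.1 (ih h.2) (abs_nonneg _) ((abs_nonneg a).trans h.1)

theorem ChainTerm.abs_eval_le {T : ChainTerm} {p : ℝ³} {c : ℝ} (hT : ∀ x ∈ T, |x.2 p| ≤ c) :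
    |T.eval u E p| ≤ |(T.map Prod.fst).foldr pd u (E p)| * c ^ T.length := by
  rw [eval, abs_mul]
  refine mul_le_mul_of_nonneg_left ?_ (abs_nonneg _)
  refine (abs_list_prod_le_pow ?_).trans_eq (by rw [List.length_map])
  simp only [List.mem_map]
  rintro _ ⟨x, hx, rfl⟩
  exact hT x hx

theorem abs_foldr_pd_comp_le (hΩ : IsOpen Ω) (hU : IsOpen U) (hu : ContDiffOn ℝ ∞ u Ω)
    (hE : ∀ j, PartialsBoundedBy r (E · j)) (hEU : MapsTo E U Ω) {d : ℝ} (hd : 0 ≤ d)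
    {M : ℝ³ → ℝ} (hbound : ∀ ws : List (Fin 3), ∀ p ∈ U,
      |ws.foldr pd u (E p)| * r p ^ ws.length ≤ d ^ ws.length * ws.length ! * M p)
    (ws : List (Fin 3)) {p : ℝ³} (hp : p ∈ U) :
    |ws.foldr pd (fun q => u (E q)) p| ≤ (3 * d + 1) ^ ws.length * ws.length ! * M p := by
  have hM : 0 ≤ M p := (abs_nonneg _).trans (by simpa using hbound [] p hp)
  have hterm : ∀ T ∈ chainExpansion E ws, |T.eval u E p| ≤ T.weight d * M p := fun T hT => by
    have hfac := partialsBoundedBy_of_mem_chainExpansion hE hT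
    refine (T.abs_eval_le fun x hx => (hfac x hx []).2 p).trans ?_
    simpa [ChainTerm.weight] using hbound (T.map Prod.fst) p hp
  rw [foldr_pd_comp_eq_sum_chainExpansion hΩ hU hu hE hEU ws hp]
  calc _ ≤ ((chainExpansion E ws).map fun T => T.weight d * M p).sum := abs_list_sum_le hterm
    _ = ((chainExpansion E ws).map (ChainTerm.weight d)).sum * M p := List.sum_map_mul_right ..
    _ ≤ _ := mul_le_mul_of_nonneg_right (sum_weight_chainExpansion_le hd ws) hM

end Estimate

section SphericalCoordinates

open Real

noncomputable def sphericalMap (p : ℝ³) : ℝ³ :=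
  ![sepExp sin cos p, sepExp sin sin p, sepExp cos (fun _ => 1) p]

theorem partialsBoundedBy_sphericalMap (j : Fin 3) :
    PartialsBoundedBy (fun p => exp (p 2)) (sphericalMap · j) := by
  have hsin := abs_iteratedDeriv_sin_le_one
  have hcos := abs_iteratedDeriv_cos_le_one
  have hone : ∀ n x, |iteratedDeriv n (fun _ : ℝ => (1 : ℝ)) x| ≤ 1 := fun n x => by
    rw [iteratedDeriv_const]; split_ifs <;> simp
  fin_cases j
  · exact partialsBoundedBy_sepExp contDiff_sin contDiff_cos hsin hcos
  · exact partialsBoundedBy_sepExp contDiff_sin contDiff_sin hsin hsin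
  · exact partialsBoundedBy_sepExp contDiff_cos contDiff_const hcos hone

theorem rad3_sphericalMap (p : ℝ³) : rad3 (sphericalMap p) = exp (p 2) := by
  have h : sphericalMap p 0 ^ 2 + sphericalMap p 1 ^ 2 + sphericalMap p 2 ^ 2 = exp (p 2) ^ 2 := by
    simp only [sphericalMap, sepExp, Matrix.cons_val_zero, Matrix.cons_val_one,
      Matrix.cons_val_two, Matrix.head_cons, Matrix.tail_cons]
    linear_combination exp (p 2) ^ 2 * sin (p 0) ^ 2 * sin_sq_add_cos_sq (p 1) +
      exp (p 2) ^ 2 * sin_sq_add_cos_sq (p 0)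
  rw [rad3, h, sqrt_sq (exp_pos _).le]

theorem arccos_sphericalMap {p : ℝ³} (h₀ : 0 ≤ p 0) (hπ : p 0 ≤ π) :
    arccos (sphericalMap p 2 / rad3 (sphericalMap p)) = p 0 := by
  rw [rad3_sphericalMap]
  simp [sphericalMap, sepExp, arccos_cos h₀ hπ]

def vertexSector (φ₀ ρ : ℝ) : Set ℝ³ :=
  {x | 0 < rad3 x ∧ rad3 x < ρ ∧ φ₀ < arccos (x 2 / rad3 x) ∧ arccos (x 2 / rad3 x) < π - φ₀}

def sphericalSector (φ₀ ρ : ℝ) : Set ℝ³ := {p | φ₀ < p 0 ∧ p 0 < π - φ₀ ∧ p 2 < log ρ}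

theorem isOpen_sphericalSector (φ₀ ρ : ℝ) : IsOpen (sphericalSector φ₀ ρ) :=
  (isOpen_lt continuous_const (continuous_apply 0)).inter
    ((isOpen_lt (continuous_apply 0) continuous_const).inter
      (isOpen_lt (continuous_apply 2) continuous_const))

theorem mapsTo_sphericalMap {φ₀ ρ : ℝ} (hφ₀ : 0 < φ₀) (hρ : 0 < ρ) :
    MapsTo sphericalMap (sphericalSector φ₀ ρ) (vertexSector φ₀ ρ) := by
  rintro p ⟨h₀, hπ, hρp⟩
  rw [vertexSector, mem_ofPred_eq, arccos_sphericalMap (by linarith) (by linarith),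
    rad3_sphericalMap]
  exact ⟨exp_pos _, (lt_log_iff_exp_lt hρ).1 hρp, h₀, hπ⟩

theorem isOpen_vertexSector (φ₀ ρ : ℝ) : IsOpen (vertexSector φ₀ ρ) := by
  have hrad : Continuous rad3 := by unfold rad3; fun_prop
  have hshell : IsOpen {x : ℝ³ | 0 < rad3 x ∧ rad3 x < ρ} := isOpen_Ioo.preimage hrad
  have hangle :
      ContinuousOn (fun x : ℝ³ => arccos (x 2 / rad3 x)) {x | 0 < rad3 x ∧ rad3 x < ρ} :=
    continuous_arccos.comp_continuousOn
      ((continuous_apply 2).continuousOn.div hrad.continuousOn fun x hx => hx.1.ne')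
  convert hangle.isOpen_inter_preimage hshell (isOpen_Ioo (a := φ₀) (b := π - φ₀)) using 1
  ext x
  simp [vertexSector, and_assoc]

end SphericalCoordinates

section VertexEstimate

open Real

theorem count_zero_add_count_one_add_count_two (ws : List (Fin 3)) :
    ws.count 0 + ws.count 1 + ws.count 2 = ws.length := by
  induction ws with
  | nil => rfl
  | cons i ws ih => fin_cases i <;> simp <;> omega

theorem factorial_mul_factorial_mul_factorial_le (a b c : ℕ) : a ! * b ! * c ! ≤ (a + b + c)! :=
  calc a ! * b ! * c ! ≤ (a + b)! * c ! :=
        Nat.mul_le_mul_right _ (Nat.le_of_dvd (Nat.factorial_pos _)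
          (Nat.factorial_mul_factorial_dvd_factorial_add a b))
    _ ≤ (a + b + c)! :=
        Nat.le_of_dvd (Nat.factorial_pos _) (Nat.factorial_mul_factorial_dvd_factorial_add _ c)

theorem abs_foldr_pd_le_of_abs_Dop_le {Ω : Set ℝ³} (hΩ : IsOpen Ω) {u : ℝ³ → ℝ}
    (hu : ContDiffOn ℝ ∞ u Ω) {C d s : ℝ} (hC : 0 ≤ C) (hd : 0 ≤ d)
    (hbound : ∀ a b c : ℕ, ∀ x ∈ Ω, |Dop a b c u x| ≤
      C * d ^ (a + b + c) * (a ! * b ! * c !) * rad3 x ^ (s - (a + b + c : ℝ)))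
    (ws : List (Fin 3)) {x : ℝ³} (hx : x ∈ Ω) :
    |ws.foldr pd u x| ≤ C * d ^ ws.length * ws.length ! * rad3 x ^ (s - ws.length) := by
  have hlen := count_zero_add_count_one_add_count_two ws
  have hfac : ((ws.count 0)! * (ws.count 1)! * (ws.count 2)! : ℝ) ≤ ws.length ! := by
    rw [← hlen]; exact_mod_cast factorial_mul_factorial_mul_factorial_le _ _ _
  have hlen' : (ws.count 0 + ws.count 1 + ws.count 2 : ℝ) = ws.length := by exact_mod_cast hlen
  have hrad : 0 ≤ rad3 x ^ (s - ws.length) := rpow_nonneg (sqrt_nonneg _) _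
  rw [foldr_pd_eq_Dop hΩ hu ws hx]
  refine (hbound _ _ _ x hx).trans ?_
  rw [hlen, hlen']
  gcongr

theorem abs_Dop_comp_sphericalMap_le {φ₀ ρ : ℝ} (hφ₀ : 0 < φ₀) (hρ : 0 < ρ) {u : ℝ³ → ℝ}
    (hu : ContDiffOn ℝ ∞ u (vertexSector φ₀ ρ)) {C d s : ℝ} (hC : 0 ≤ C) (hd : 0 ≤ d)
    (hbound : ∀ a b c : ℕ, ∀ x ∈ vertexSector φ₀ ρ, |Dop a b c u x| ≤
      C * d ^ (a + b + c) * (a ! * b ! * c !) * rad3 x ^ (s - (a + b + c : ℝ)))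
    (a b c : ℕ) {p : ℝ³} (hp : p ∈ sphericalSector φ₀ ρ) :
    |Dop a b c (fun q => u (sphericalMap q)) p| ≤
      (3 * d + 1) ^ (a + b + c) * (a + b + c)! * (C * exp (s * p 2)) := by
  have hpull : ∀ (ws : List (Fin 3)), ∀ p ∈ sphericalSector φ₀ ρ,
      |ws.foldr pd u (sphericalMap p)| * exp (p 2) ^ ws.length ≤
        d ^ ws.length * ws.length ! * (C * exp (s * p 2)) := fun ws p hp => by
    have h := abs_foldr_pd_le_of_abs_Dop_le (isOpen_vertexSector φ₀ ρ) hu hC hd hbound ws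
      (mapsTo_sphericalMap hφ₀ hρ hp)
    rw [rad3_sphericalMap, ← exp_mul] at h
    calc _ ≤ C * d ^ ws.length * ws.length ! * exp (p 2 * (s - ws.length)) *
          exp (p 2) ^ ws.length := by gcongr
      _ = _ := by
        rw [← exp_nat_mul, mul_assoc _ (exp _), ← exp_add]
        ring_nf
  have h := abs_foldr_pd_comp_le (isOpen_vertexSector φ₀ ρ) (isOpen_sphericalSector φ₀ ρ) hu
    partialsBoundedBy_sphericalMap (mapsTo_sphericalMap hφ₀ hρ) hd hpull
    (List.replicate a 0 ++ List.replicate b 1 ++ List.replicate c 2) hp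
  rwa [List.length_append, List.length_append, List.length_replicate, List.length_replicate,
    List.length_replicate, ← Dop_eq_foldr] at h

end VertexEstimate

section Integral

open Real MeasureTheory

theorem setIntegral_le_of_le_mul_exp {f : ℝ³ → ℝ} {a₀ b₀ a₁ b₁ L c B : ℝ} (h₀ : a₀ ≤ b₀)
    (h₁ : a₁ ≤ b₁) (hc : 0 < c) (hf₀ : ∀ p, 0 ≤ f p)
    (hf : ∀ p, a₀ < p 0 → p 0 < b₀ → p 2 < L → f p ≤ B * exp (c * p 2)) :
    ∫ p in {p : ℝ³ | a₀ < p 0 ∧ p 0 < b₀ ∧ a₁ < p 1 ∧ p 1 < b₁ ∧ p 2 < L}, f p ≤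
      B * (b₀ - a₀) * (b₁ - a₁) * (exp (c * L) / c) := by
  let s : Fin 3 → Set ℝ := ![Ioo a₀ b₀, Ioo a₁ b₁, Iio L]
  let g : Fin 3 → ℝ → ℝ := ![fun _ => B, fun _ => 1, fun x => exp (c * x)]
  have hS : {p : ℝ³ | a₀ < p 0 ∧ p 0 < b₀ ∧ a₁ < p 1 ∧ p 1 < b₁ ∧ p 2 < L} = univ.pi s := by
    ext p; simp [s, Fin.forall_fin_succ, and_assoc]
  have hμ : volume.restrict (univ.pi s) = Measure.pi fun i => volume.restrict (s i) := by
    rw [volume_pi, Measure.restrict_pi_pi]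
  have hg : ∀ i, Integrable (g i) (volume.restrict (s i)) := by
    intro i
    fin_cases i
    · exact integrableOn_const measure_Ioo_lt_top.ne
    · exact integrableOn_const measure_Ioo_lt_top.ne
    · exact (integrableOn_exp_mul_Iic hc L).mono_set Iio_subset_Iic_self
  rw [hS, hμ]
  calc ∫ p, f p ∂Measure.pi (fun i => volume.restrict (s i))
      ≤ ∫ p, ∏ i, g i (p i) ∂Measure.pi (fun i => volume.restrict (s i)) := by
        refine integral_mono_of_nonneg (.of_forall hf₀) (Integrable.fintype_prod_dep hg) ?_
        rw [← hμ]
        refine ae_restrict_of_forall_mem (MeasurableSet.univ_pi fun i => ?_) fun p hp => ?_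
        · fin_cases i <;> simp [s, measurableSet_Ioo, measurableSet_Iio]
        · simp only [mem_univ_pi, Fin.forall_fin_succ] at hp
          simpa [g, Fin.prod_univ_three] using hf p (hp.1).1 (hp.1).2 hp.2.2.1
    _ = B * (b₀ - a₀) * (b₁ - a₁) * (exp (c * L) / c) := by
        rw [integral_fintype_prod_eq_prod, Fin.prod_univ_three]
        simp only [g, s, Matrix.cons_val_zero, Matrix.cons_val_one, Matrix.cons_val,
          integral_const, measureReal_restrict_apply MeasurableSet.univ, univ_inter,
          volume_real_Ioo, sub_nonneg, h₀, h₁, sup_of_le_left, smul_eq_mul, mul_one,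
          ← integral_Iic_eq_integral_Iio, integral_exp_mul_Iic hc]
        ring

end Integral

section Integrand

theorem card_mIdx_le (m : ℕ) : (mIdx m).card ≤ (m + 1) ^ 3 :=
  (Finset.card_filter_le _ _).trans (by simp [Finset.card_product, pow_three])

theorem succ_pow_three_le_sixteen_pow (m : ℕ) : (m + 1) ^ 3 ≤ 16 ^ m :=
  calc (m + 1) ^ 3 ≤ (m + 1) ^ 4 := Nat.pow_le_pow_right m.succ_pos (by norm_num)
    _ ≤ (2 ^ m) ^ 4 := Nat.pow_le_pow_left Nat.lt_two_pow_self 4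
    _ = 16 ^ m := by rw [← pow_mul, mul_comm, pow_mul]; norm_num

theorem sum_mIdx_sq_le {m : ℕ} {F : ℕ × ℕ × ℕ → ℝ} {B : ℝ} (hF : ∀ α ∈ mIdx m, |F α| ≤ B) :
    ∑ α ∈ mIdx m, F α ^ 2 ≤ 16 ^ m * B ^ 2 := by
  have hcard : ((mIdx m).card : ℝ) ≤ 16 ^ m := by
    exact_mod_cast (card_mIdx_le m).trans (succ_pow_three_le_sixteen_pow m)
  calc ∑ α ∈ mIdx m, F α ^ 2 ≤ ∑ _α ∈ mIdx m, B ^ 2 :=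
        Finset.sum_le_sum fun α hα => sq_le_sq' (abs_le.1 (hF α hα)).1 (abs_le.1 (hF α hα)).2
    _ ≤ 16 ^ m * B ^ 2 := by
        rw [Finset.sum_const, nsmul_eq_mul]
        exact mul_le_mul_of_nonneg_right hcard (sq_nonneg _)

theorem exp_mul_sum_sq_Dop_le {F : ℝ³ → ℝ} {C d s : ℝ} (hC : 0 ≤ C) (hd : 0 ≤ d) {m : ℕ}
    {p : ℝ³} (hF : ∀ a b c : ℕ,
      |Dop a b c F p| ≤ (3 * d + 1) ^ (a + b + c) * (a + b + c)! * (C * Real.exp (s * p 2))) :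
    Real.exp (p 2) * ∑ α ∈ mIdx m, Dop α.1 α.2.1 α.2.2 F p ^ 2 ≤
      16 ^ m * (C * (3 * d + 1) ^ m * m !) ^ 2 * Real.exp ((1 + 2 * s) * p 2) := by
  have hsum := sum_mIdx_sq_le (m := m) (F := fun α => Dop α.1 α.2.1 α.2.2 F p)
    (B := (3 * d + 1) ^ m * m ! * (C * Real.exp (s * p 2))) fun α hα => by
      refine (hF _ _ _).trans ?_
      have hαm : α.1 + α.2.1 + α.2.2 ≤ m := (Finset.mem_filter.1 hα).2
      gcongr
      linarith
  calc _ ≤ Real.exp (p 2) * (16 ^ m * ((3 * d + 1) ^ m * m ! * (C * Real.exp (s * p 2))) ^ 2) := by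
        gcongr
    _ = _ := by
        rw [show (1 + 2 * s) * p 2 = p 2 + s * p 2 + s * p 2 by ring, Real.exp_add, Real.exp_add]
        ring

end Integrand

/-- **Proposition 2.2.1**: differentiability estimate in modified spherical coordinates
in a vertex neighbourhood. -/
theorem stmt0
    (φ₀ ρv βv : ℝ) (hφ₀ : 0 < φ₀) (hφ : φ₀ < Real.pi / 2) (hρ : 0 < ρv)
    (hβ : βv ∈ Set.Ioo (0 : ℝ) (1 / 2))
    (Ω : Set (Fin 3 → ℝ))
    (hΩ : Ω = {x | 0 < rad3 x ∧ rad3 x < ρv ∧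
      φ₀ < Real.arccos (x 2 / rad3 x) ∧ Real.arccos (x 2 / rad3 x) < Real.pi - φ₀})
    (w : (Fin 3 → ℝ) → ℝ) (hw : ContDiffOn ℝ (⊤ : ℕ∞) w Ω) (wv : ℝ)
    (C d : ℝ) (hC : 0 ≤ C) (hd : 1 ≤ d)
    (hbound : ∀ a b c : ℕ, ∀ x ∈ Ω,
      |Dop a b c (fun y => w y - wv) x| ≤
        C * d ^ (a + b + c) * (Nat.factorial a * Nat.factorial b * Nat.factorial c) *
          rad3 x ^ (1 / 2 - βv - (a + b + c : ℝ)))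
    (W : (Fin 3 → ℝ) → ℝ)
    (hW : W = fun p => w ![Real.exp (p 2) * Real.sin (p 0) * Real.cos (p 1),
      Real.exp (p 2) * Real.sin (p 0) * Real.sin (p 1), Real.exp (p 2) * Real.cos (p 0)]) :
    ∃ C₁ : ℝ, 0 < C₁ ∧ ∃ d₁ : ℝ, 0 < d₁ ∧ ∀ m : ℕ, 1 ≤ m → ∀ ν : ℝ, 0 < ν → ν ≤ ρv →
      (∫ p in {p : Fin 3 → ℝ | φ₀ < p 0 ∧ p 0 < Real.pi - φ₀ ∧
          -Real.pi < p 1 ∧ p 1 < Real.pi ∧ p 2 < Real.log ν},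
        Real.exp (p 2) *
          ∑ α ∈ mIdx m, (Dop α.1 α.2.1 α.2.2 (fun q => W q - wv) p) ^ 2) ≤
      C₁ * (d₁ ^ m * Nat.factorial m) ^ 2 * ν ^ (1 - 2 * βv) := by
  obtain ⟨-, hβ⟩ := hβ
  subst hΩ
  have hWu : (fun q => W q - wv) = fun q => w (sphericalMap q) - wv := by
    subst hW; ext q; simp only [sphericalMap, sepExp]; ring_nf
  have hpt := abs_Dop_comp_sphericalMap_le hφ₀ hρ (hw.sub contDiffOn_const) hC (by linarith) hbound
  refine ⟨(C ^ 2 + 1) * (2 * Real.pi ^ 2 * ρv), by positivity, 4 * (3 * d + 1), by positivity,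
    fun m _ ν hν hνρ => ?_⟩
  have hint : ∀ p : Fin 3 → ℝ, φ₀ < p 0 → p 0 < Real.pi - φ₀ → p 2 < Real.log ν →
      Real.exp (p 2) * ∑ α ∈ mIdx m, Dop α.1 α.2.1 α.2.2 (fun q => W q - wv) p ^ 2 ≤
        16 ^ m * (C * (3 * d + 1) ^ m * m !) ^ 2 * Real.exp ((1 + 2 * (1 / 2 - βv)) * p 2) :=
    fun p h₀ hπ hν' => hWu ▸ exp_mul_sum_sq_Dop_le hC (by linarith) fun a b c =>
      hpt a b c ⟨h₀, hπ, hν'.trans_le (Real.log_le_log hν hνρ)⟩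
  have hν2 : Real.exp ((1 + 2 * (1 / 2 - βv)) * Real.log ν) = ν ^ (1 - 2 * βv) * ν := by
    rw [mul_comm, ← Real.rpow_def_of_pos hν,
      show 1 + 2 * (1 / 2 - βv) = (1 - 2 * βv) + 1 by ring, Real.rpow_add hν, Real.rpow_one]
  have h16 : (16 : ℝ) ^ m = (4 ^ m) ^ 2 := by rw [← pow_mul, mul_comm, pow_mul]; norm_num
  refine (setIntegral_le_of_le_mul_exp (by linarith) (by linarith) (by linarith)
    (fun p => by positivity) hint).trans ?_
  rw [hν2]
  calc _ = C ^ 2 * ((4 * (3 * d + 1)) ^ m * m !) ^ 2 * (Real.pi - φ₀ - φ₀) * (2 * Real.pi) *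
        (ν ^ (1 - 2 * βv) * ν / (1 + 2 * (1 / 2 - βv))) := by
        rw [h16, mul_pow (4 : ℝ)]; ring
    _ ≤ (C ^ 2 + 1) * ((4 * (3 * d + 1)) ^ m * m !) ^ 2 * Real.pi * (2 * Real.pi) *
        (ν ^ (1 - 2 * βv) * ρv) := by
        gcongr ?_ * _ * ?_ * _ * ?_
        · linarith
        · linarith
        · linarith
        · exact (div_le_self (by positivity) (by linarith)).trans (by gcongr)
    _ = _ := by ring
end

section
/- Let Ω ⊂ ℝ³ be a bounded open set, let μ₀ > 0 and M > 0, and let a_{ij} : ℝ³ → ℝ (1 ≤ i,j ≤ 3) be continuously differentiable functions with a_{ij} = a_{ji}, satisfying the uniform ellipticity condition Σ_{i,j=1}^{3} a_{ij}(x) ξ_i ξ_j ≥ μ₀ |ξ|² for all x ∈ Ω and ξ ∈ ℝ³, and the bounds |a_{ij}(x)| ≤ M and |∇a_{ij}(x)| ≤ M for all x ∈ Ω. Then there exists a constant c > 0, depending only on μ₀ and M, such that for every smooth function u : ℝ³ → ℝ, writing w_i := Σ_{j=1}^{3} a_{ij} ∂u/∂x_j, (μ₀²/2) Σ_{i,j=1}^{3}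 ∫_Ω |∂²u/∂x_i∂x_j|² dx ≤ Σ_{i,j=1}^{3} ∫_Ω (∂w_i/∂x_j)(∂w_j/∂x_i) dx + c Σ_{i=1}^{3} ∫_Ω |∂u/∂x_i|² dx. -/
open MeasureTheory

/-!
At each point write `∂ⱼ wᵢ = (A H + B)ᵢⱼ`, with `H` the (symmetric) Hessian of `u` and `B` the
lower-order term `Bᵢⱼ = Σₖ ∂ⱼ aᵢₖ ∂ₖ u`, so that `Σᵢⱼ ∂ⱼ wᵢ ∂ᵢ wⱼ = tr ((A H + B)²)`. Writing
`A = P + μ₀` with `P ≥ 0` in the Loewner order,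
`tr (A H A H) = tr (P · H A H) + μ₀ tr (H P H) + μ₀² tr H²`, and the first two traces are traces of
products of positive semidefinite matrices, hence nonnegative. The cross terms are bounded by
Cauchy–Schwarz for the Frobenius inner product, and Young's inequality absorbs them into half of
`μ₀² ‖H‖²` at the cost of a multiple of `‖B‖² ≲ M² |∇u|²`. The estimate is thus pointwise, and
it is integrated over `Ω`.
-/

open scoped Matrix.Norms.Frobenius MatrixOrder ComplexOrder

namespace Matrix

variable {m n : Type*} [Fintype m] [Fintype n]

theorem frobenius_norm_sq (A : Matrix m n ℝ) : ‖A‖ ^ 2 = ∑ i, ∑ j, A i j ^ 2 := by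
  rw [frobenius_norm_def, ← Real.sqrt_eq_rpow, Real.sq_sqrt (by positivity)]
  simp

theorem abs_trace_mul_le (X : Matrix m n ℝ) (Y : Matrix n m ℝ) :
    |(X * Y).trace| ≤ ‖X‖ * ‖Y‖ := by
  have hXY : (X * Y).trace = ∑ p : m × n, X p.1 p.2 * Yᵀ p.1 p.2 := by
    simp [trace, mul_apply, Fintype.sum_prod_type]
  have hcs := Finset.sum_mul_sq_le_sq_mul_sq Finset.univ (fun p : m × n => X p.1 p.2)
    (fun p => Yᵀ p.1 p.2)
  simp only [Fintype.sum_prod_type, ← frobenius_norm_sq, frobenius_norm_transpose, ← hXY] at hcs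
  exact abs_le_of_sq_le_sq (by rwa [mul_pow]) (by positivity)

theorem frobenius_norm_le_of_abs_le {M : ℝ} (hM : 0 ≤ M) {A : Matrix n n ℝ}
    (hA : ∀ i j, |A i j| ≤ M) : ‖A‖ ≤ Fintype.card n * M := by
  have h : ‖A‖ ^ 2 ≤ (Fintype.card n * M) ^ 2 :=
    calc ‖A‖ ^ 2 = ∑ i, ∑ j, A i j ^ 2 := frobenius_norm_sq A
      _ ≤ ∑ _i : n, ∑ _j : n, M ^ 2 := Finset.sum_le_sum fun i _ => Finset.sum_le_sum fun j _ =>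
          sq_le_sq.mpr ((hA i j).trans (le_abs_self M))
      _ = (Fintype.card n * M) ^ 2 := by simp; ring
  exact (abs_le_of_sq_le_sq' h (by positivity)).2

theorem frobenius_norm_sq_of_sum_mul_le {M : ℝ} {D : n → n → n → ℝ} (hD : ∀ i j k, |D i j k| ≤ M)
    (g : n → ℝ) :
    ‖of fun i j => ∑ k, D i j k * g k‖ ^ 2 ≤ Fintype.card n ^ 3 * M ^ 2 * ∑ k, g k ^ 2 := by
  have hentry : ∀ i j, (∑ k, D i j k * g k) ^ 2 ≤ Fintype.card n * M ^ 2 * ∑ k, g k ^ 2 :=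
    fun i j => (Finset.sum_mul_sq_le_sq_mul_sq _ _ _).trans <| mul_le_mul_of_nonneg_right
      ((Finset.sum_le_sum fun k _ => sq_le_sq.mpr ((hD i j k).trans (le_abs_self M))).trans_eq
        (by simp)) (by positivity)
  calc ‖of fun i j => ∑ k, D i j k * g k‖ ^ 2 = ∑ i, ∑ j, (∑ k, D i j k * g k) ^ 2 :=
        frobenius_norm_sq _
    _ ≤ ∑ _i : n, ∑ _j : n, Fintype.card n * M ^ 2 * ∑ k, g k ^ 2 :=
        Finset.sum_le_sum fun i _ => Finset.sum_le_sum fun j _ => hentry i j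
    _ = Fintype.card n ^ 3 * M ^ 2 * ∑ k, g k ^ 2 := by simp; ring

theorem IsHermitian.trace_mul_self {H : Matrix n n ℝ} (hH : H.IsHermitian) :
    (H * H).trace = ‖H‖ ^ 2 := by
  rw [frobenius_norm_sq]
  simp only [trace, diag_apply, mul_apply, sq]
  exact Finset.sum_congr rfl fun i _ => Finset.sum_congr rfl fun j _ => by
    rw [← hH.apply j i, star_trivial]

variable [DecidableEq n]

theorem smul_one_le_of_forall_le_dotProduct_mulVec {μ : ℝ} {A : Matrix n n ℝ} (hA : A.IsHermitian)
    (h : ∀ ξ : n → ℝ, μ * (ξ ⬝ᵥ ξ) ≤ ξ ⬝ᵥ A *ᵥ ξ) : μ • 1 ≤ A := by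
  refine le_iff.mpr <|
    .of_dotProduct_mulVec_nonneg (hA.sub (isHermitian_one.smul (.all μ))) fun ξ => ?_
  simpa [sub_mulVec, smul_mulVec, dotProduct_smul] using h ξ

theorem trace_mul_nonneg {𝕜 : Type*} [RCLike 𝕜] {P Q : Matrix n n 𝕜} (hP : 0 ≤ P) (hQ : 0 ≤ Q) :
    0 ≤ (P * Q).trace := by
  obtain ⟨B, rfl⟩ := CStarAlgebra.nonneg_iff_eq_star_mul_self.mp hP
  rw [Matrix.mul_assoc, trace_mul_comm, star_eq_conjTranspose]
  exact ((nonneg_iff_posSemidef.mp hQ).mul_mul_conjTranspose_same B).trace_nonneg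

theorem sq_mul_trace_mul_self_le_of_smul_one_le {μ : ℝ} (hμ : 0 ≤ μ) {A H : Matrix n n ℝ}
    (hA : μ • (1 : Matrix n n ℝ) ≤ A) (hH : H.IsHermitian) :
    μ ^ 2 * (H * H).trace ≤ (A * H * (A * H)).trace := by
  set P := A - μ • 1
  have hP : 0 ≤ P := sub_nonneg.mpr hA
  have hA0 : 0 ≤ A := le_trans (smul_nonneg hμ zero_le_one) hA
  have hHAH : (H * A * H).PosSemidef := by
    simpa [hH.eq, ← conjTranspose_eq_transpose_of_trivial] using
      (nonneg_iff_posSemidef.mp hA0).conjTranspose_mul_mul_same H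
  have hHPH : (H * P * H).PosSemidef := by
    simpa [hH.eq, ← conjTranspose_eq_transpose_of_trivial] using
      (nonneg_iff_posSemidef.mp hP).conjTranspose_mul_mul_same H
  have hAP : A = P + μ • 1 := by simp [P]
  have hsplitA : (A * H * (A * H)).trace = (P * (H * A * H)).trace + μ * (H * A * H).trace := by
    rw [hAP]; noncomm_ring [trace_add, trace_smul, smul_eq_mul]
  have hsplitHAH : (H * A * H).trace = (H * P * H).trace + μ * (H * H).trace := by
    rw [hAP]; noncomm_ring [trace_add, trace_smul, smul_eq_mul]
  have hPHAH := trace_mul_nonneg hP hHAH.nonneg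
  have hHPH' := hHPH.trace_nonneg
  nlinarith

theorem sq_mul_norm_sq_le_trace_mul_self_add {μ α : ℝ} (hμ : 0 < μ) {A H : Matrix n n ℝ}
    (B : Matrix n n ℝ) (hA : μ • (1 : Matrix n n ℝ) ≤ A) (hAα : ‖A‖ ≤ α) (hH : H.IsHermitian) :
    μ ^ 2 / 2 * ‖H‖ ^ 2 ≤
      ((A * H + B) * (A * H + B)).trace + (1 + 2 * α ^ 2 / μ ^ 2) * ‖B‖ ^ 2 := by
  have hexpand : ((A * H + B) * (A * H + B)).trace
      = (A * H * (A * H)).trace + 2 * (A * H * B).trace + (B * B).trace := by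
    rw [add_mul, mul_add, mul_add, trace_add, trace_add, trace_add, trace_mul_comm B (A * H)]
    ring
  have hmain := sq_mul_trace_mul_self_le_of_smul_one_le hμ.le hA hH
  rw [hH.trace_mul_self] at hmain
  have hcross : |(A * H * B).trace| ≤ α * ‖H‖ * ‖B‖ :=
    (abs_trace_mul_le _ _).trans <| mul_le_mul_of_nonneg_right
      ((frobenius_norm_mul A H).trans (mul_le_mul_of_nonneg_right hAα (norm_nonneg H)))
      (norm_nonneg B)
  have hquad : |(B * B).trace| ≤ ‖B‖ ^ 2 := (abs_trace_mul_le B B).trans_eq (sq _).symm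
  have hyoung : 2 * (α * ‖H‖ * ‖B‖) ≤ μ ^ 2 / 2 * ‖H‖ ^ 2 + 2 * α ^ 2 / μ ^ 2 * ‖B‖ ^ 2 := by
    have := sq_nonneg (μ ^ 2 * ‖H‖ - 2 * α * ‖B‖)
    rw [div_mul_eq_mul_div, ← sub_nonneg]
    field_simp
    nlinarith
  rw [hexpand]
  nlinarith [abs_le.mp hcross, abs_le.mp hquad]

end Matrix

theorem setIntegral_mul_sum_le {X ι₁ ι₂ ι₃ : Type*} [MeasurableSpace X] {μ : Measure X}
    [Fintype ι₁] [Fintype ι₂] [Fintype ι₃] {s : Set X} (hs : MeasurableSet s)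
    {f : ι₁ → X → ℝ} {g : ι₂ → X → ℝ} {h : ι₃ → X → ℝ} {α c : ℝ}
    (hf : ∀ i, IntegrableOn (f i) s μ) (hg : ∀ j, IntegrableOn (g j) s μ)
    (hh : ∀ k, IntegrableOn (h k) s μ)
    (hle : ∀ x ∈ s, α * ∑ i, f i x ≤ ∑ j, g j x + c * ∑ k, h k x) :
    α * ∑ i, ∫ x in s, f i x ∂μ ≤ ∑ j, ∫ x in s, g j x ∂μ + c * ∑ k, ∫ x in s, h k x ∂μ := by
  have hf' := integrable_finsetSum Finset.univ fun i _ => hf i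
  have hg' := integrable_finsetSum Finset.univ fun j _ => hg j
  have hh' := integrable_finsetSum Finset.univ fun k _ => hh k
  rw [← integral_finsetSum _ fun i _ => hf i, ← integral_finsetSum _ fun j _ => hg j,
    ← integral_finsetSum _ fun k _ => hh k, ← integral_const_mul, ← integral_const_mul,
    ← integral_add hg' (hh'.const_mul c)]
  exact setIntegral_mono_on (hf'.const_mul α) (hg'.add (hh'.const_mul c)) hs
    fun x hx => by simpa only [Finset.sum_apply] using hle x hx

section PartialDerivatives

variable {f : (Fin 3 → ℝ) → ℝ}

theorem ContDiff.pd {k l : WithTop ℕ∞} (hf : ContDiff ℝ k f) (hkl : l + 1 ≤ k) (i : Fin 3) :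
    ContDiff ℝ l (pd i f) :=
  (hf.fderiv_right hkl).clm_apply contDiff_const

theorem abs_pd_le_norm_fderiv (i : Fin 3) (x : Fin 3 → ℝ) : |pd i f x| ≤ ‖fderiv ℝ f x‖ := by
  simpa [pd, Pi.norm_single] using (fderiv ℝ f x).le_opNorm (Pi.single i 1)

theorem pd_pd_comm (hf : ContDiff ℝ 2 f) (i j : Fin 3) (x : Fin 3 → ℝ) :
    pd i (pd j f) x = pd j (pd i f) x := by
  have hd : DifferentiableAt ℝ (fderiv ℝ f) x :=
    (hf.fderiv_right (m := 1) le_rfl).differentiable one_ne_zero x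
  have hpd : ∀ p q, pd p (pd q f) x = fderiv ℝ (fderiv ℝ f) x (Pi.single p 1) (Pi.single q 1) :=
    fun p q => by
      change fderiv ℝ (fun z => fderiv ℝ f z (Pi.single q 1)) x (Pi.single p 1) = _
      rw [fderiv_clm_apply hd (differentiableAt_const _)]
      simp
  rw [hpd, hpd, (hf.contDiffAt.isSymmSndFDerivAt (by simp)).eq]

noncomputable def flux (a : Fin 3 → Fin 3 → (Fin 3 → ℝ) → ℝ) (u : (Fin 3 → ℝ) → ℝ) (i : Fin 3) :
    (Fin 3 → ℝ) → ℝ :=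
  fun y => ∑ k, a i k y * pd k u y

variable {a : Fin 3 → Fin 3 → (Fin 3 → ℝ) → ℝ} {u : (Fin 3 → ℝ) → ℝ}

theorem contDiff_flux (ha : ∀ i j, ContDiff ℝ 1 (a i j)) (hu : ContDiff ℝ 2 u) (i : Fin 3) :
    ContDiff ℝ 1 (flux a u i) :=
  ContDiff.sum fun k _ => (ha i k).mul (hu.pd (by norm_num) k)

theorem pd_flux (ha : ∀ i j, ContDiff ℝ 1 (a i j)) (hu : ContDiff ℝ 2 u) (i j : Fin 3)
    (x : Fin 3 → ℝ) :
    pd j (flux a u i) x = ∑ k, (a i k x * pd k (pd j u) x + pd j (a i k) x * pd k u x) := by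
  have ha' : ∀ k, DifferentiableAt ℝ (a i k) x := fun k =>
    (ha i k).differentiable one_ne_zero x
  have hu' : ∀ k, DifferentiableAt ℝ (pd k u) x := fun k =>
    (hu.pd (l := 1) (by norm_num) k).differentiable one_ne_zero x
  change fderiv ℝ (fun y => ∑ k, a i k y * pd k u y) x (Pi.single j 1) = _
  rw [fderiv_fun_sum (A := fun k y => a i k y * pd k u y) fun k _ => (ha' k).mul (hu' k),
    sum_apply]
  refine Finset.sum_congr rfl fun k _ => ?_
  rw [fderiv_fun_mul (ha' k) (hu' k), pd_pd_comm hu k j]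
  simp only [add_apply, smul_apply, smul_eq_mul, pd]
  ring

open Matrix in
theorem miranda_talenti_pointwise {μ₀ M : ℝ} (hμ₀ : 0 < μ₀) (hM : 0 ≤ M)
    (ha : ∀ i j, ContDiff ℝ 1 (a i j)) (hsymm : ∀ i j, a i j = a j i) (hu : ContDiff ℝ 2 u)
    {x : Fin 3 → ℝ}
    (hell : ∀ ξ : Fin 3 → ℝ,
      μ₀ * (ξ 0 ^ 2 + ξ 1 ^ 2 + ξ 2 ^ 2) ≤ ∑ i : Fin 3, ∑ j : Fin 3, a i j x * ξ i * ξ j)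
    (hbd : ∀ i j, |a i j x| ≤ M) (hdbd : ∀ i j, ‖fderiv ℝ (a i j) x‖ ≤ M) :
    μ₀ ^ 2 / 2 * ∑ i : Fin 3, ∑ j : Fin 3, pd i (pd j u) x ^ 2 ≤
      ∑ i : Fin 3, ∑ j : Fin 3, pd j (flux a u i) x * pd i (flux a u j) x +
        27 * M ^ 2 * (1 + 18 * M ^ 2 / μ₀ ^ 2) * ∑ i : Fin 3, pd i u x ^ 2 := by
  set A : Matrix (Fin 3) (Fin 3) ℝ := of fun i j => a i j x
  set H : Matrix (Fin 3) (Fin 3) ℝ := of fun i j => pd i (pd j u) x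
  set B : Matrix (Fin 3) (Fin 3) ℝ := of fun i j => ∑ k, pd j (a i k) x * pd k u x
  have hA : A.IsHermitian := IsHermitian.ext fun i j => by simp [A, hsymm i j]
  have hAμ : μ₀ • 1 ≤ A := smul_one_le_of_forall_le_dotProduct_mulVec hA fun ξ => by
    convert hell ξ using 1
    · rw [dotProduct, Fin.sum_univ_three]; ring
    · simp only [A, dotProduct, mulVec, of_apply, Finset.mul_sum]
      exact Finset.sum_congr rfl fun i _ => Finset.sum_congr rfl fun j _ => by ring
  have hH : H.IsHermitian := IsHermitian.ext fun i j => by simp [H, pd_pd_comm hu i j]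
  have hAM : ‖A‖ ≤ 3 * M := (frobenius_norm_le_of_abs_le (A := A) hM hbd).trans_eq (by simp)
  have hBM : ‖B‖ ^ 2 ≤ 27 * M ^ 2 * ∑ k, pd k u x ^ 2 := by
    have := frobenius_norm_sq_of_sum_mul_le (D := fun i j k => pd j (a i k) x)
      (fun i j k => (abs_pd_le_norm_fderiv j x).trans (hdbd i k)) (fun k => pd k u x)
    norm_num at this
    exact this
  have hW : ∀ i j, pd j (flux a u i) x = (A * H + B) i j := fun i j => by
    simp [pd_flux ha hu, Finset.sum_add_distrib, mul_apply, A, H, B]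
  have htr : ((A * H + B) * (A * H + B)).trace
      = ∑ i : Fin 3, ∑ j : Fin 3, pd j (flux a u i) x * pd i (flux a u j) x := by
    simp [trace, mul_apply, hW]
  have key := sq_mul_norm_sq_le_trace_mul_self_add hμ₀ B hAμ hAM hH
  rw [frobenius_norm_sq H, htr] at key
  calc μ₀ ^ 2 / 2 * ∑ i : Fin 3, ∑ j : Fin 3, pd i (pd j u) x ^ 2
      ≤ _ := key
    _ ≤ _ := by
      rw [show 1 + 2 * (3 * M) ^ 2 / μ₀ ^ 2 = 1 + 18 * M ^ 2 / μ₀ ^ 2 by ring]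
      nlinarith [mul_le_mul_of_nonneg_left hBM (by positivity : 0 ≤ 1 + 18 * M ^ 2 / μ₀ ^ 2)]

end PartialDerivatives

/-- The integrated Miranda–Talenti-type estimate (3.15): all second derivatives of `u` are
bounded by the quantity `Σ_{i,j} ∫ ∂_j w_i ∂_i w_j` for the flux `w = A ∇u` of a symmetric,
uniformly elliptic, `C¹` coefficient matrix, plus lower-order terms. -/
theorem stmt11 (Ω : Set (Fin 3 → ℝ)) (hΩo : IsOpen Ω) (hΩb : Bornology.IsBounded Ω)
    (μ₀ M : ℝ) (hμ₀ : 0 < μ₀) (hM : 0 < M) :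
    ∃ c : ℝ, 0 < c ∧ ∀ a : Fin 3 → Fin 3 → (Fin 3 → ℝ) → ℝ,
      (∀ i j, ContDiff ℝ 1 (a i j)) →
      (∀ i j, a i j = a j i) →
      (∀ x ∈ Ω, ∀ ξ : Fin 3 → ℝ,
        μ₀ * (ξ 0 ^ 2 + ξ 1 ^ 2 + ξ 2 ^ 2) ≤ ∑ i : Fin 3, ∑ j : Fin 3, a i j x * ξ i * ξ j) →
      (∀ i j, ∀ x ∈ Ω, |a i j x| ≤ M) →
      (∀ i j, ∀ x ∈ Ω, ‖fderiv ℝ (a i j) x‖ ≤ M) →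
      ∀ u : (Fin 3 → ℝ) → ℝ, ContDiff ℝ (⊤ : ℕ∞) u →
        μ₀ ^ 2 / 2 * ∑ i : Fin 3, ∑ j : Fin 3, ∫ x in Ω, (pd i (pd j u) x) ^ 2 ≤
          (∑ i : Fin 3, ∑ j : Fin 3, ∫ x in Ω,
            pd j (fun y => ∑ k : Fin 3, a i k y * pd k u y) x *
              pd i (fun y => ∑ k : Fin 3, a j k y * pd k u y) x) +
          c * ∑ i : Fin 3, ∫ x in Ω, (pd i u x) ^ 2 := by
  refine ⟨27 * M ^ 2 * (1 + 18 * M ^ 2 / μ₀ ^ 2), by positivity, ?_⟩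
  intro a ha hsymm hell hbd hdbd u hu
  have hu2 : ContDiff ℝ 2 u := hu.of_le (by norm_cast)
  have hint : ∀ {F : (Fin 3 → ℝ) → ℝ}, Continuous F → IntegrableOn F Ω := fun hF =>
    (hF.locallyIntegrable.integrableOn_isCompact hΩb.isCompact_closure).mono_set subset_closure
  have hpd : ∀ {F : (Fin 3 → ℝ) → ℝ}, ContDiff ℝ 1 F → ∀ i, Continuous (pd i F) := fun hF i =>
    (hF.pd (l := 0) (by norm_num) i).continuous
  have hintegrated := setIntegral_mul_sum_le hΩo.measurableSet
    (f := fun p : Fin 3 × Fin 3 => fun x => pd p.1 (pd p.2 u) x ^ 2)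
    (g := fun p : Fin 3 × Fin 3 => fun x => pd p.2 (flux a u p.1) x * pd p.1 (flux a u p.2) x)
    (h := fun i x => pd i u x ^ 2)
    (fun p => hint ((hpd (hu2.pd (by norm_num) p.2) p.1).pow 2))
    (fun p => hint <|
      (hpd (contDiff_flux ha hu2 p.1) p.2).mul (hpd (contDiff_flux ha hu2 p.2) p.1))
    (fun i => hint ((hpd (hu2.of_le (by norm_num)) i).pow 2))
    (fun x hx => by
      simpa only [Fintype.sum_prod_type] using miranda_talenti_pointwise hμ₀ hM.le ha hsymm hu2
        (hell x hx) (hbd · · x hx) (hdbd · · x hx))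
  simp only [Fintype.sum_prod_type] at hintegrated
  exact hintegrated
end

section
/- For a smooth function u on (0, π/2) × ℝ (variables (φ, χ)) define (Vu)(φ,χ) := cos φ · sin φ · ∂u/∂φ(φ,χ) + sin²φ · ∂u/∂χ(φ,χ), and let V^m denote the m-fold iterate of V. Suppose there exist constants C ≥ 0 and d ≥ 1 such that for all integers α₁, α₂ ≥ 0 with α₁ + α₂ ≥ 1 and all (φ,χ) ∈ (0,π/2) × ℝ, |(sin φ)^{α₁} · ∂^{α₁+α₂} u / ∂φ^{α₁}∂χ^{α₂}(φ,χ)| ≤ C d^{α₁+α₂} α₁! α₂!. Then there exist constants C', d' > 0 such that for every integer m ≥ 1 and all (φ,χ) ∈ (0,π/2) × ℝ, |(V^m u)(φ,χ)| ≤ C' d'^m m!. -/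
/-- First-order partial derivative in direction `i` of a function on `ℝ²`. -/
noncomputable def pd2 (i : Fin 2) (f : (Fin 2 → ℝ) → ℝ) : (Fin 2 → ℝ) → ℝ :=
  fun x => fderiv ℝ f x (Pi.single i 1)

/-- Iterated partial derivative `D^{(a,b)}` on `ℝ²`. -/
noncomputable def Dop2 (a b : ℕ) (f : (Fin 2 → ℝ) → ℝ) : (Fin 2 → ℝ) → ℝ :=
  (pd2 0)^[a] ((pd2 1)^[b] f)

/-- The vector field `V = cos φ sin φ ∂/∂φ + sin²φ ∂/∂χ` (the derivative `∂/∂ψ` in the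
vertex-edge coordinate `ψ = ln tan φ`). -/
noncomputable def Vop (u : (Fin 2 → ℝ) → ℝ) : (Fin 2 → ℝ) → ℝ :=
  fun x => Real.cos (x 0) * Real.sin (x 0) * pd2 0 u x + Real.sin (x 0) ^ 2 * pd2 1 u x

/-!
`V` maps a term `c cos^p φ sin^q φ ∂_φ^a ∂_χ^b u` to four terms of the same shape: differentiating
the trigonometric factor gives `-p c cos^p sin^(q+2)` and `q c cos^(p+2) sin^q` times `∂^(a,b) u`,
and `V ∂^(a,b) u = cos sin ∂^(a+1,b) u + sin² ∂^(a,b+1) u` (the partial derivatives commute).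
So `V^m u` is a finite sum of such terms with `a ≤ q`, `p + q = 2m` and `1 ≤ a + b ≤ m`.
Since `a ≤ q`, the hypothesis bounds each term by `C` times its weight `|c| d^(a+b) a! b!`, and one
application of `V` multiplies the weight of a term by `p + q + d(a+1) + d(b+1) ≤ 4d(m+1)`; hence
the total weight of the terms of `V^m u` is at most `(4d)^m m!`.
-/

open Real Set Function
open scoped ContDiff Nat

lemma List.sum_map_flatMap {α β M : Type*} [AddCommMonoid M] (L : List α) (g : α → List β)
    (f : β → M) : ((L.flatMap g).map f).sum = (L.map fun a => ((g a).map f).sum).sum := by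
  simp [List.flatMap_def, List.sum_flatten, List.map_flatten, Function.comp_def]

lemma hasFDerivAt_list_sum {ι E F : Type*} [NormedAddCommGroup E] [NormedSpace ℝ E]
    [NormedAddCommGroup F] [NormedSpace ℝ F] {x : E} (L : List ι) (G : ι → E → F)
    (hG : ∀ j ∈ L, DifferentiableAt ℝ (G j) x) :
    HasFDerivAt (fun y => (L.map fun j => G j y).sum) (L.map fun j => fderiv ℝ (G j) x).sum x := by
  induction L with
  | nil => exact hasFDerivAt_const 0 x
  | cons j L ih =>
    simp only [List.map_cons, List.sum_cons]
    exact (hG j (by simp)).hasFDerivAt.add (ih fun k hk => hG k (by simp [hk]))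

section PartialDerivatives

variable {U : Set (Fin 2 → ℝ)} {f g : (Fin 2 → ℝ) → ℝ} {x : Fin 2 → ℝ}

lemma pd2_congr (hU : IsOpen U) (h : EqOn f g U) (i : Fin 2) : EqOn (pd2 i f) (pd2 i g) U :=
  fun x hx => by
    simp only [pd2, (Filter.eventuallyEq_of_mem (hU.mem_nhds hx) h).fderiv_eq]

lemma iterate_pd2_congr (hU : IsOpen U) (h : EqOn f g U) (i : Fin 2) (k : ℕ) :
    EqOn ((pd2 i)^[k] f) ((pd2 i)^[k] g) U := by
  induction k with
  | zero => exact h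
  | succ k ih => simpa only [iterate_succ_apply'] using pd2_congr hU ih i

lemma ContDiffOn.pd2_of_isOpen (hf : ContDiffOn ℝ ∞ f U) (hU : IsOpen U) (i : Fin 2) :
    ContDiffOn ℝ ∞ (pd2 i f) U :=
  (hf.fderiv_of_isOpen hU le_rfl).clm_apply contDiffOn_const

lemma ContDiffOn.iterate_pd2_of_isOpen (hf : ContDiffOn ℝ ∞ f U) (hU : IsOpen U) (i : Fin 2)
    (k : ℕ) : ContDiffOn ℝ ∞ ((pd2 i)^[k] f) U := by
  induction k with
  | zero => exact hf
  | succ k ih => simpa only [iterate_succ_apply'] using ih.pd2_of_isOpen hU i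

lemma ContDiffOn.Dop2_of_isOpen (hf : ContDiffOn ℝ ∞ f U) (hU : IsOpen U) (a b : ℕ) :
    ContDiffOn ℝ ∞ (Dop2 a b f) U :=
  (hf.iterate_pd2_of_isOpen hU 1 b).iterate_pd2_of_isOpen hU 0 a

lemma pd2_one_pd2_zero_of_contDiffAt (hf : ContDiffAt ℝ 2 f x) :
    pd2 1 (pd2 0 f) x = pd2 0 (pd2 1 f) x := by
  have hf' : DifferentiableAt ℝ (fderiv ℝ f) x :=
    (hf.fderiv_right (m := 1) le_rfl).differentiableAt one_ne_zero
  have hsymm : IsSymmSndFDerivAt ℝ f x :=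
    hf.isSymmSndFDerivAt (by rw [minSmoothness_of_isRCLikeNormedField])
  have hpd2_pd2 (v w : Fin 2 → ℝ) :
      fderiv ℝ (fun y => fderiv ℝ f y v) x w = fderiv ℝ (fderiv ℝ f) x w v := by
    rw [fderiv_clm_apply hf' (differentiableAt_const v)]
    simp
  unfold pd2
  rw [hpd2_pd2, hpd2_pd2]
  exact hsymm _ _

lemma pd2_comm (hf : ContDiffOn ℝ ∞ f U) (hU : IsOpen U) :
    EqOn (pd2 1 (pd2 0 f)) (pd2 0 (pd2 1 f)) U := fun _ hx =>
  pd2_one_pd2_zero_of_contDiffAt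
    ((hf.contDiffAt (hU.mem_nhds hx)).of_le (WithTop.coe_le_coe.mpr le_top))

lemma pd2_one_iterate_pd2_zero (hf : ContDiffOn ℝ ∞ f U) (hU : IsOpen U) (a : ℕ) :
    EqOn (pd2 1 ((pd2 0)^[a] f)) ((pd2 0)^[a] (pd2 1 f)) U := by
  induction a generalizing f with
  | zero => exact fun _ _ => rfl
  | succ a ih =>
    intro x hx
    rw [iterate_succ_apply, ih (hf.pd2_of_isOpen hU 0) hx,
      iterate_pd2_congr hU (pd2_comm hf hU) 0 a hx, ← iterate_succ_apply]

lemma pd2_zero_Dop2 (a b : ℕ) (f : (Fin 2 → ℝ) → ℝ) : pd2 0 (Dop2 a b f) = Dop2 (a + 1) b f :=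
  (iterate_succ_apply' _ _ _).symm

lemma pd2_one_Dop2 (hf : ContDiffOn ℝ ∞ f U) (hU : IsOpen U) (a b : ℕ) :
    EqOn (pd2 1 (Dop2 a b f)) (Dop2 a (b + 1) f) U := fun _ hx => by
  rw [Dop2, pd2_one_iterate_pd2_zero (hf.iterate_pd2_of_isOpen hU 1 b) hU a hx, Dop2,
    iterate_succ_apply' (pd2 1)]

lemma pd2_list_sum {ι : Type*} (L : List ι) (F : ι → (Fin 2 → ℝ) → ℝ)
    (hF : ∀ j ∈ L, DifferentiableAt ℝ (F j) x) (i : Fin 2) :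
    pd2 i (fun y => (L.map fun j => F j y).sum) x = (L.map fun j => pd2 i (F j) x).sum := by
  rw [pd2, (hasFDerivAt_list_sum L F hF).fderiv]
  exact (map_list_sum (ContinuousLinearMap.apply ℝ ℝ (Pi.single i 1)) _).trans
    (by simp [Function.comp_def, pd2])

lemma Vop_congr (hU : IsOpen U) (h : EqOn f g U) : EqOn (Vop f) (Vop g) U := fun _ hx => by
  simp only [Vop, pd2_congr hU h 0 hx, pd2_congr hU h 1 hx]

lemma Vop_list_sum {ι : Type*} (L : List ι) (F : ι → (Fin 2 → ℝ) → ℝ)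
    (hF : ∀ j ∈ L, DifferentiableAt ℝ (F j) x) :
    Vop (fun y => (L.map fun j => F j y).sum) x = (L.map fun j => Vop (F j) x).sum := by
  simp only [Vop, pd2_list_sum L F hF, List.sum_map_add, List.sum_map_mul_left]

lemma Vop_comp_apply_zero_mul {h : ℝ → ℝ} (hh : DifferentiableAt ℝ h (x 0))
    (hf : DifferentiableAt ℝ f x) :
    Vop (fun y => h (y 0) * f y) x =
      cos (x 0) * sin (x 0) * deriv h (x 0) * f x + h (x 0) * Vop f x := by
  have hh' : HasFDerivAt (fun y : Fin 2 → ℝ => h (y 0))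
      (deriv h (x 0) • (ContinuousLinearMap.proj 0 : (Fin 2 → ℝ) →L[ℝ] ℝ)) x :=
    hh.hasDerivAt.comp_hasFDerivAt x (hasFDerivAt_apply 0 x)
  simp only [Vop, pd2, fderiv_fun_mul hh'.differentiableAt hf, hh'.fderiv, add_apply, smul_apply,
    smul_eq_mul, ContinuousLinearMap.proj_apply, Pi.single_eq_same, Pi.single_eq_of_ne zero_ne_one,
    mul_one, mul_zero, add_zero]
  ring

lemma Vop_Dop2 (hf : ContDiffOn ℝ ∞ f U) (hU : IsOpen U) (a b : ℕ) :
    EqOn (Vop (Dop2 a b f))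
      (fun x => cos (x 0) * sin (x 0) * Dop2 (a + 1) b f x + sin (x 0) ^ 2 * Dop2 a (b + 1) f x)
      U := fun _ hx => by
  simp only [Vop, pd2_zero_Dop2, pd2_one_Dop2 hf hU a b hx]

end PartialDerivatives

structure VTerm where
  coeff : ℝ
  cosPow : ℕ
  sinPow : ℕ
  ordφ : ℕ
  ordχ : ℕ

namespace VTerm

variable {U : Set (Fin 2 → ℝ)} {u : (Fin 2 → ℝ) → ℝ} {x : Fin 2 → ℝ} {d : ℝ} {m : ℕ}
  {s t : VTerm}

noncomputable def factor (t : VTerm) (s : ℝ) : ℝ :=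
  t.coeff * cos s ^ t.cosPow * sin s ^ t.sinPow

noncomputable def eval (t : VTerm) (u : (Fin 2 → ℝ) → ℝ) (x : Fin 2 → ℝ) : ℝ :=
  t.factor (x 0) * Dop2 t.ordφ t.ordχ u x

-- The first two terms come from `V` hitting `t.factor`, the last two from `V` hitting `∂^(a,b) u`.
def applyV (t : VTerm) : List VTerm :=
  [⟨-t.cosPow * t.coeff, t.cosPow, t.sinPow + 2, t.ordφ, t.ordχ⟩,
   ⟨t.sinPow * t.coeff, t.cosPow + 2, t.sinPow, t.ordφ, t.ordχ⟩,
   ⟨t.coeff, t.cosPow + 1, t.sinPow + 1, t.ordφ + 1, t.ordχ⟩,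
   ⟨t.coeff, t.cosPow, t.sinPow + 2, t.ordφ, t.ordχ + 1⟩]

lemma cos_mul_sin_mul_deriv_factor (t : VTerm) (s : ℝ) :
    cos s * sin s * deriv t.factor s =
      -t.cosPow * t.coeff * cos s ^ t.cosPow * sin s ^ (t.sinPow + 2) +
        t.sinPow * t.coeff * cos s ^ (t.cosPow + 2) * sin s ^ t.sinPow := by
  obtain ⟨c, p, q, a, b⟩ := t
  have h : HasDerivAt (factor ⟨c, p, q, a, b⟩)
      (c * (p * cos s ^ (p - 1) * -sin s) * sin s ^ q +
        c * cos s ^ p * (q * sin s ^ (q - 1) * cos s)) s :=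
    (((hasDerivAt_cos s).pow p).const_mul c).mul ((hasDerivAt_sin s).pow q)
  rw [h.deriv]
  rcases p with _ | p <;> rcases q with _ | q <;> simp only [Nat.cast_zero, Nat.cast_succ,
    Nat.add_sub_cancel, pow_succ, pow_zero] <;> ring

lemma differentiableAt_eval (hu : ContDiffOn ℝ ∞ u U) (hU : IsOpen U) (t : VTerm)
    (hx : x ∈ U) : DifferentiableAt ℝ (t.eval u) x := by
  have hfactor : Differentiable ℝ t.factor := by unfold factor; fun_prop
  exact ((hfactor _).comp x (differentiableAt_apply 0 x)).mul
    (((hu.Dop2_of_isOpen hU _ _).contDiffAt (hU.mem_nhds hx)).differentiableAt (by simp))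

lemma Vop_eval (hu : ContDiffOn ℝ ∞ u U) (hU : IsOpen U) (t : VTerm) :
    EqOn (Vop (t.eval u)) (fun x => (t.applyV.map fun s => s.eval u x).sum) U := fun x hx => by
  have hfactor : DifferentiableAt ℝ t.factor (x 0) := by unfold factor; fun_prop
  have hD := ((hu.Dop2_of_isOpen hU t.ordφ t.ordχ).contDiffAt (hU.mem_nhds hx)).differentiableAt
    (by simp)
  unfold eval
  rw [Vop_comp_apply_zero_mul hfactor hD, Vop_Dop2 hu hU _ _ hx, cos_mul_sin_mul_deriv_factor]
  simp only [applyV, List.map_cons, List.map_nil, List.sum_cons, List.sum_nil, factor]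
  ring

noncomputable def weight (d : ℝ) (t : VTerm) : ℝ :=
  |t.coeff| * d ^ (t.ordφ + t.ordχ) * t.ordφ ! * t.ordχ !

lemma sum_weight_applyV (d : ℝ) (t : VTerm) :
    (t.applyV.map (weight d)).sum =
      (t.cosPow + t.sinPow + d * (t.ordφ + 1) + d * (t.ordχ + 1)) * t.weight d := by
  simp only [applyV, weight, List.map_cons, List.map_nil, List.sum_cons, List.sum_nil, abs_mul,
    abs_neg, Nat.abs_cast, Nat.factorial_succ, Nat.cast_mul, Nat.cast_succ,
    show t.ordφ + 1 + t.ordχ = t.ordφ + t.ordχ + 1 by omega, ← add_assoc, pow_succ]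
  ring

lemma weight_nonneg (hd : 0 ≤ d) (t : VTerm) : 0 ≤ t.weight d := by
  unfold weight
  positivity

structure Admissible (m : ℕ) (t : VTerm) : Prop where
  ordφ_le_sinPow : t.ordφ ≤ t.sinPow
  one_le_ord : 1 ≤ t.ordφ + t.ordχ
  ord_le : t.ordφ + t.ordχ ≤ m
  cosPow_add_sinPow : t.cosPow + t.sinPow = 2 * m

lemma Admissible.of_mem_applyV (ht : t.Admissible m) (hs : s ∈ t.applyV) :
    s.Admissible (m + 1) := by
  obtain ⟨h₁, h₂, h₃, h₄⟩ := ht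
  simp only [applyV, List.mem_cons, List.not_mem_nil, or_false] at hs
  rcases hs with rfl | rfl | rfl | rfl <;> constructor <;> dsimp only <;> omega

lemma Admissible.sum_weight_applyV_le (hd : 1 ≤ d) (ht : t.Admissible m) :
    (t.applyV.map (weight d)).sum ≤ 4 * d * (m + 1) * t.weight d := by
  have hord : (t.ordφ : ℝ) + t.ordχ ≤ m := by exact_mod_cast ht.ord_le
  have hpow : (t.cosPow : ℝ) + t.sinPow = 2 * m := by exact_mod_cast ht.cosPow_add_sinPow
  rw [sum_weight_applyV]
  refine mul_le_mul_of_nonneg_right ?_ (t.weight_nonneg (by linarith))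
  nlinarith [(m.cast_nonneg : (0 : ℝ) ≤ m)]

lemma Admissible.abs_eval_le {C : ℝ} (ht : t.Admissible m)
    (hbound : ∀ a b : ℕ, 1 ≤ a + b →
      |sin (x 0) ^ a * Dop2 a b u x| ≤ C * d ^ (a + b) * (a ! * b !)) :
    |t.eval u x| ≤ C * t.weight d := by
  have hcos : |cos (x 0)| ^ t.cosPow ≤ 1 := pow_le_one₀ (abs_nonneg _) (abs_cos_le_one _)
  have hsin : |sin (x 0)| ^ t.sinPow ≤ |sin (x 0)| ^ t.ordφ :=
    pow_le_pow_of_le_one (abs_nonneg _) (abs_sin_le_one _) ht.ordφ_le_sinPow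
  calc |t.eval u x|
      = |t.coeff| *
          (|cos (x 0)| ^ t.cosPow * (|sin (x 0)| ^ t.sinPow * |Dop2 t.ordφ t.ordχ u x|)) := by
        simp only [eval, factor, abs_mul, abs_pow]
        ring
    _ ≤ |t.coeff| * (1 * (|sin (x 0)| ^ t.ordφ * |Dop2 t.ordφ t.ordχ u x|)) := by gcongr
    _ = |t.coeff| * |sin (x 0) ^ t.ordφ * Dop2 t.ordφ t.ordχ u x| := by
        rw [one_mul, abs_mul, abs_pow]
    _ ≤ |t.coeff| * (C * d ^ (t.ordφ + t.ordχ) * (t.ordφ ! * t.ordχ !)) := by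
        gcongr
        exact hbound _ _ ht.one_le_ord
    _ = C * t.weight d := by rw [weight]; ring

end VTerm

-- `vExpansion m` lists the terms of `V^(m+1) u`, not of `V^m u`.
def vExpansion : ℕ → List VTerm
  | 0 => [⟨1, 1, 1, 1, 0⟩, ⟨1, 0, 2, 0, 1⟩]
  | m + 1 => (vExpansion m).flatMap VTerm.applyV

lemma iterate_Vop_eqOn_sum_vExpansion {U : Set (Fin 2 → ℝ)} {u : (Fin 2 → ℝ) → ℝ}
    (hu : ContDiffOn ℝ ∞ u U) (hU : IsOpen U) (m : ℕ) :
    EqOn (Vop^[m + 1] u) (fun x => ((vExpansion m).map fun t => t.eval u x).sum) U := by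
  induction m with
  | zero =>
    intro x _
    simp [vExpansion, VTerm.eval, VTerm.factor, Vop, Dop2]
  | succ m ih =>
    intro x hx
    rw [iterate_succ_apply', Vop_congr hU ih hx,
      Vop_list_sum _ _ fun t _ => t.differentiableAt_eval hu hU hx]
    dsimp only
    rw [vExpansion, List.sum_map_flatMap]
    exact congrArg List.sum (List.map_congr_left fun t _ => t.Vop_eval hu hU hx)

lemma VTerm.admissible_of_mem_vExpansion {m : ℕ} {t : VTerm} (ht : t ∈ vExpansion m) :
    t.Admissible (m + 1) := by
  induction m generalizing t with
  | zero =>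
    simp only [vExpansion, List.mem_cons, List.not_mem_nil, or_false] at ht
    rcases ht with rfl | rfl <;> constructor <;> norm_num
  | succ m ih =>
    obtain ⟨s, hs, hts⟩ := List.mem_flatMap.1 ht
    exact (ih hs).of_mem_applyV hts

lemma sum_weight_vExpansion_le {d : ℝ} (hd : 1 ≤ d) (m : ℕ) :
    ((vExpansion m).map (VTerm.weight d)).sum ≤ (4 * d) ^ (m + 1) * (m + 1)! := by
  induction m with
  | zero =>
    norm_num [vExpansion, VTerm.weight]
    linarith
  | succ m ih =>
    calc ((vExpansion (m + 1)).map (VTerm.weight d)).sum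
        = ((vExpansion m).map fun t => (t.applyV.map (VTerm.weight d)).sum).sum :=
          List.sum_map_flatMap ..
      _ ≤ ((vExpansion m).map fun t => 4 * d * (m + 2) * t.weight d).sum :=
          List.sum_le_sum fun t ht => by
            simpa [add_assoc, one_add_one_eq_two] using
              (VTerm.admissible_of_mem_vExpansion ht).sum_weight_applyV_le hd
      _ = 4 * d * (m + 2) * ((vExpansion m).map (VTerm.weight d)).sum :=
          List.sum_map_mul_left ..
      _ ≤ 4 * d * (m + 2) * ((4 * d) ^ (m + 1) * (m + 1)!) := by gcongr
      _ = (4 * d) ^ (m + 1 + 1) * (m + 1 + 1)! := by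
          push_cast [Nat.factorial_succ]
          ring

/-- Weighted Gevrey bounds on the derivatives of `u` yield Gevrey bounds on all iterates
`V^m u` of the vertex-edge vector field (the computation concluding estimate (A.24)). -/
theorem stmt15 (u : (Fin 2 → ℝ) → ℝ)
    (hu : ContDiffOn ℝ (⊤ : ℕ∞) u {x | 0 < x 0 ∧ x 0 < Real.pi / 2})
    (C d : ℝ) (hC : 0 ≤ C) (hd : 1 ≤ d)
    (hbound : ∀ a b : ℕ, 1 ≤ a + b → ∀ x : Fin 2 → ℝ, 0 < x 0 → x 0 < Real.pi / 2 →
      |Real.sin (x 0) ^ a * Dop2 a b u x| ≤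
        C * d ^ (a + b) * (Nat.factorial a * Nat.factorial b)) :
    ∃ C' : ℝ, 0 < C' ∧ ∃ d' : ℝ, 0 < d' ∧ ∀ m : ℕ, 1 ≤ m →
      ∀ x : Fin 2 → ℝ, 0 < x 0 → x 0 < Real.pi / 2 →
        |Vop^[m] u x| ≤ C' * d' ^ m * Nat.factorial m := by
  have hU : IsOpen {x : Fin 2 → ℝ | 0 < x 0 ∧ x 0 < π / 2} :=
    isOpen_Ioo.preimage (continuous_apply 0)
  refine ⟨C + 1, by positivity, 4 * d, by positivity, fun m hm x hx₀ hxπ => ?_⟩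
  obtain ⟨n, rfl⟩ := Nat.exists_eq_add_of_le' hm
  set L := vExpansion n
  rw [iterate_Vop_eqOn_sum_vExpansion hu hU n ⟨hx₀, hxπ⟩]
  calc |(L.map fun t => t.eval u x).sum|
      ≤ (L.map fun t => |t.eval u x|).sum :=
        (List.le_sum_of_subadditive _ abs_zero.le abs_add_le _).trans_eq (by rw [List.map_map]; rfl)
    _ ≤ (L.map fun t => C * t.weight d).sum :=
        List.sum_le_sum fun t ht => (VTerm.admissible_of_mem_vExpansion ht).abs_eval_le
          fun a b hab => hbound a b hab x hx₀ hxπ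
    _ = C * (L.map (VTerm.weight d)).sum := List.sum_map_mul_left ..
    _ ≤ C * ((4 * d) ^ (n + 1) * (n + 1)!) := by gcongr; exact sum_weight_vExpansion_le hd n
    _ ≤ (C + 1) * (4 * d) ^ (n + 1) * (n + 1)! := by
        rw [mul_assoc]
        gcongr
        linarith
end

section
/- Let A : ℕ × ℕ → ℝ be a function satisfying: A(m,k) ≥ 0 for all m, k; A(m,k) = 0 whenever k = 0 or k > m; A(1,1) ≤ 4; and A(m+1, k) ≤ 2m · A(m,k) + 2 · A(m, k−1) for every integer m ≥ 1 and every 1 ≤ k ≤ m+1. Then for every m ≥ 1 and every 1 ≤ k ≤ m, A(m,k) ≤ 4^m · m! / k!. -/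
/-!
Multiplying through by `k!` turns the recurrence into
`A(m+1,k) k! ≤ 2m · A(m,k) k! + 2k · A(m,k-1) (k-1)!`, so if every `A(m,j) j!` is at most
`4^m m!`, then `A(m+1,k) k! ≤ (2m + 2k) 4^m m! ≤ 4^(m+1) (m+1)!` because `k ≤ m + 1`.
The vanishing of `A(m,k)` for `k = 0` and `k > m` makes the bound hold for every `k`,
which is what lets the induction on `m` go through at the boundary indices.
-/

open Nat

lemma mul_factorial_le_of_le_two_mul_add {n k : ℕ} {x y z C : ℝ}
    (hk : 1 ≤ k) (hkn : k ≤ n + 1) (hC : 0 ≤ C)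
    (hx : x ≤ 2 * (n : ℝ) * y + 2 * z)
    (hy : y * k ! ≤ C) (hz : z * (k - 1)! ≤ C) :
    x * k ! ≤ 4 * (n + 1) * C := by
  have hfact : (k ! : ℝ) = k * (k - 1)! := by
    exact_mod_cast (Nat.mul_factorial_pred (by omega : k ≠ 0)).symm
  have hkn' : (k : ℝ) ≤ n + 1 := by exact_mod_cast hkn
  calc x * k !
      ≤ (2 * (n : ℝ) * y + 2 * z) * k ! := by gcongr
    _ = 2 * n * (y * k !) + 2 * k * (z * (k - 1)!) := by rw [hfact]; ring
    _ ≤ 2 * n * C + 2 * k * C := by gcongr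
    _ ≤ 4 * (n + 1) * C := by nlinarith

theorem mul_factorial_le_four_pow_mul_factorial (A : ℕ → ℕ → ℝ)
    (hzero : ∀ m k, k = 0 ∨ m < k → A m k = 0)
    (hinit : A 1 1 ≤ 4)
    (hrec : ∀ m : ℕ, 1 ≤ m → ∀ k : ℕ, 1 ≤ k → k ≤ m + 1 →
      A (m + 1) k ≤ 2 * (m : ℝ) * A m k + 2 * A m (k - 1))
    {m : ℕ} (hm : 1 ≤ m) (k : ℕ) :
    A m k * k ! ≤ 4 ^ m * m ! := by
  induction m, hm using Nat.le_induction generalizing k with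
  | base =>
    rcases k with _ | _ | k
    · simp [hzero 1 0 (Or.inl rfl)]
    · simpa using hinit
    · simp [hzero 1 (k + 2) (Or.inr (by omega))]
  | succ n hn ih =>
    by_cases hk : 1 ≤ k ∧ k ≤ n + 1
    · calc A (n + 1) k * k !
          ≤ 4 * (n + 1) * (4 ^ n * n !) :=
            mul_factorial_le_of_le_two_mul_add hk.1 hk.2 (by positivity)
              (hrec n hn k hk.1 hk.2) (ih k) (ih (k - 1))
        _ = 4 ^ (n + 1) * (n + 1)! := by rw [Nat.factorial_succ]; push_cast; ring
    · rw [hzero (n + 1) k (by omega), zero_mul]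
      positivity

theorem stmt16_general (A : ℕ → ℕ → ℝ)
    (hzero : ∀ m k, k = 0 ∨ m < k → A m k = 0)
    (hinit : A 1 1 ≤ 4)
    (hrec : ∀ m : ℕ, 1 ≤ m → ∀ k : ℕ, 1 ≤ k → k ≤ m + 1 →
      A (m + 1) k ≤ 2 * (m : ℝ) * A m k + 2 * A m (k - 1)) :
    ∀ m : ℕ, 1 ≤ m → ∀ k : ℕ, 1 ≤ k → k ≤ m →
      A m k ≤ 4 ^ m * (Nat.factorial m : ℝ) / (Nat.factorial k : ℝ) := by
  intro m hm k _ _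
  rw [le_div_iff₀ (by positivity)]
  exact mul_factorial_le_four_pow_mul_factorial A hzero hinit hrec hm k

/-- The combinatorial lemma (A.26)–(A.28): the coefficient masses `A_k^m` of the iterated
vertex-edge vector field satisfy `A(m,k) ≤ 4^m m!/k!`. -/
theorem stmt16 (A : ℕ → ℕ → ℝ)
    (hnonneg : ∀ m k, 0 ≤ A m k)
    (hzero : ∀ m k, k = 0 ∨ m < k → A m k = 0)
    (hinit : A 1 1 ≤ 4)
    (hrec : ∀ m : ℕ, 1 ≤ m → ∀ k : ℕ, 1 ≤ k → k ≤ m + 1 →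
      A (m + 1) k ≤ 2 * (m : ℝ) * A m k + 2 * A m (k - 1)) :
    ∀ m : ℕ, 1 ≤ m → ∀ k : ℕ, 1 ≤ k → k ≤ m →
      A m k ≤ 4 ^ m * (Nat.factorial m : ℝ) / (Nat.factorial k : ℝ) :=
  stmt16_general A hzero hinit hrec
end

section
/- Let β ∈ (0, 1/2), δ > 0, c ∈ ℝ, and let s : (0, δ) → ℝ be a smooth function for which there are constants C ≥ 0 and d ≥ 1 such that |x^{β + k − 1/2} · (d/dx)^k (s − c)(x)| ≤ C d^k k! for every integer k ≥ 0 and every x ∈ (0, δ). Define g(ζ) := s(e^ζ) − c for ζ < ln δ. Then there exist constants C', d' > 0 such that for every integer k ≥ 0 and every ζ < ln δ, |g^{(k)}(ζ)| ≤ C' d'^k k! · e^{(1/2 − β)ζ}. -/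
/-! Writing `x = exp ζ`, induction on `k` with the chain rule gives
`(d/dζ)^k f(exp ζ) = ∑ⱼ S(k,j) xʲ f⁽ʲ⁾(x)`, where `S(k,j)` are the Stirling numbers of the second
kind, since `d/dζ (xʲ f⁽ʲ⁾(x)) = j xʲ f⁽ʲ⁾(x) + xʲ⁺¹ f⁽ʲ⁺¹⁾(x)` matches their recurrence.
Splitting `xʲ = x^(1/2-β) · x^(β+j-1/2)` bounds each term by `S(k,j) C dʲ j! e^((1/2-β)ζ)`, and the
same recurrence gives `∑ⱼ S(k,j) dʲ j! ≤ (d+1)ᵏ k!`. -/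

open Finset Real

theorem sum_range_stirlingSecond_succ {R : Type*} [CommSemiring R] (k : ℕ) (a : ℕ → R) :
    ∑ j ∈ range (k + 2), (Nat.stirlingSecond (k + 1) j : R) * a j =
      ∑ j ∈ range (k + 1), (Nat.stirlingSecond k j : R) * (j * a j + a (j + 1)) := by
  have hshift : ∑ j ∈ range (k + 1), ((j + 1 : ℕ) : R) * Nat.stirlingSecond k (j + 1) * a (j + 1) =
      ∑ j ∈ range (k + 1), (j : R) * Nat.stirlingSecond k j * a j := by
    have h := sum_range_succ' (fun j => (j : R) * Nat.stirlingSecond k j * a j) (k + 1)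
    rw [sum_range_succ, Nat.stirlingSecond_eq_zero_of_lt (Nat.lt_succ_self k)] at h
    simpa using h.symm
  rw [sum_range_succ', Nat.stirlingSecond_succ_zero, Nat.cast_zero, zero_mul, add_zero]
  calc _ = ∑ j ∈ range (k + 1), ((j + 1 : ℕ) : R) * Nat.stirlingSecond k (j + 1) * a (j + 1) +
        ∑ j ∈ range (k + 1), (Nat.stirlingSecond k j : R) * a (j + 1) := by
        rw [← sum_add_distrib]
        exact sum_congr rfl fun j _ => by rw [Nat.stirlingSecond_succ_succ]; push_cast; ring
    _ = _ := by
        rw [hshift, ← sum_add_distrib]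
        exact sum_congr rfl fun j _ => by ring

theorem sum_range_stirlingSecond_mul_pow_mul_factorial_le {d : ℝ} (hd : 0 ≤ d) (k : ℕ) :
    ∑ j ∈ range (k + 1), (Nat.stirlingSecond k j : ℝ) * (d ^ j * j.factorial) ≤
      (d + 1) ^ k * k.factorial := by
  induction k with
  | zero => simp
  | succ k ih =>
    rw [sum_range_stirlingSecond_succ]
    calc _ ≤ ∑ j ∈ range (k + 1),
          (Nat.stirlingSecond k j : ℝ) * (d ^ j * j.factorial * ((d + 1) * (k + 1))) := by
          refine sum_le_sum fun j hj => mul_le_mul_of_nonneg_left ?_ (Nat.cast_nonneg _)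
          have hjk : (j : ℝ) ≤ k := by exact_mod_cast Nat.lt_succ_iff.mp (mem_range.mp hj)
          rw [pow_succ, Nat.factorial_succ, Nat.cast_mul, Nat.cast_succ]
          have hcoeff : (j : ℝ) + d * (j + 1) ≤ (d + 1) * (k + 1) := by nlinarith
          calc _ = d ^ j * j.factorial * (j + d * (j + 1)) := by ring
            _ ≤ _ := by gcongr
      _ = (d + 1) * (k + 1) *
          ∑ j ∈ range (k + 1), (Nat.stirlingSecond k j : ℝ) * (d ^ j * j.factorial) := by
          rw [mul_sum]; exact sum_congr rfl fun j _ => by ring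
      _ ≤ (d + 1) * (k + 1) * ((d + 1) ^ k * k.factorial) := by gcongr
      _ = _ := by rw [pow_succ, Nat.factorial_succ]; push_cast; ring

theorem ContDiffAt.hasDerivAt_iteratedDeriv {𝕜 F : Type*} [NontriviallyNormedField 𝕜]
    [NormedAddCommGroup F] [NormedSpace 𝕜 F] {f : 𝕜 → F} {x : 𝕜} {n : WithTop ℕ∞} {j : ℕ}
    (hf : ContDiffAt 𝕜 n f x) (hj : (j : WithTop ℕ∞) < n) :
    HasDerivAt (iteratedDeriv j f) (iteratedDeriv (j + 1) f x) x := by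
  have hdiff : DifferentiableAt 𝕜 (iteratedDeriv j f) x := by
    rw [iteratedDeriv_eq_equiv_comp]
    exact (LinearIsometryEquiv.differentiableAt _).comp x (hf.differentiableAt_iteratedFDeriv hj)
  rw [iteratedDeriv_succ]
  exact hdiff.hasDerivAt

theorem hasDerivAt_exp_pow_mul_iteratedDeriv_comp_exp {f : ℝ → ℝ} {ζ : ℝ}
    (hf : ContDiffAt ℝ (⊤ : ℕ∞) f (exp ζ)) (j : ℕ) :
    HasDerivAt (fun z => exp z ^ j * iteratedDeriv j f (exp z))
      (j * (exp ζ ^ j * iteratedDeriv j f (exp ζ)) +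
        exp ζ ^ (j + 1) * iteratedDeriv (j + 1) f (exp ζ)) ζ := by
  have hpow : HasDerivAt (fun z => exp z ^ j) (j * exp ζ ^ j) ζ := by
    convert ((hasDerivAt_id' ζ).const_mul (j : ℝ)).exp using 1
    · simp only [← exp_nat_mul]
    · rw [← exp_nat_mul]; ring
  have hcomp : HasDerivAt (fun z => iteratedDeriv j f (exp z))
      (iteratedDeriv (j + 1) f (exp ζ) * exp ζ) ζ :=
    (hf.hasDerivAt_iteratedDeriv (by exact_mod_cast ENat.natCast_lt_top j)).comp ζ
      (hasDerivAt_exp ζ)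
  exact (hpow.mul hcomp).congr_deriv (by ring)

theorem iteratedDeriv_comp_exp_eq_sum {f : ℝ → ℝ} {u : Set ℝ} (hu : IsOpen u)
    (hf : ContDiffOn ℝ (⊤ : ℕ∞) f u) (k : ℕ) {ζ : ℝ} (hζ : exp ζ ∈ u) :
    iteratedDeriv k (fun z => f (exp z)) ζ =
      ∑ j ∈ range (k + 1),
        (Nat.stirlingSecond k j : ℝ) * (exp ζ ^ j * iteratedDeriv j f (exp ζ)) := by
  induction k generalizing ζ with
  | zero => simp
  | succ k ih =>
    have hlocal : iteratedDeriv k (fun z => f (exp z)) =ᶠ[nhds ζ] fun z => ∑ j ∈ range (k + 1),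
        (Nat.stirlingSecond k j : ℝ) * (exp z ^ j * iteratedDeriv j f (exp z)) :=
      Filter.eventually_of_mem ((hu.preimage continuous_exp).mem_nhds hζ) fun z hz => ih hz
    have hderiv := HasDerivAt.fun_sum (u := range (k + 1)) fun j _ =>
      (hasDerivAt_exp_pow_mul_iteratedDeriv_comp_exp (hf.contDiffAt (hu.mem_nhds hζ)) j).const_mul
        (Nat.stirlingSecond k j : ℝ)
    rw [iteratedDeriv_succ, hlocal.deriv_eq, hderiv.deriv]
    exact (sum_range_stirlingSecond_succ k fun j => exp ζ ^ j * iteratedDeriv j f (exp ζ)).symm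

theorem abs_iteratedDeriv_comp_exp_le {f : ℝ → ℝ} {u : Set ℝ} (hu : IsOpen u)
    (hf : ContDiffOn ℝ (⊤ : ℕ∞) f u) {σ C d : ℝ} (hC : 0 ≤ C) (hd : 0 ≤ d)
    (hbound : ∀ j : ℕ, ∀ x ∈ u, |x ^ (σ + j) * iteratedDeriv j f x| ≤ C * d ^ j * j.factorial)
    (k : ℕ) {ζ : ℝ} (hζ : exp ζ ∈ u) :
    |iteratedDeriv k (fun z => f (exp z)) ζ| ≤ C * (d + 1) ^ k * k.factorial * exp (-σ * ζ) := by
  have hterm (j : ℕ) : |exp ζ ^ j * iteratedDeriv j f (exp ζ)| ≤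
      exp (-σ * ζ) * (C * d ^ j * j.factorial) := by
    have hsplit : exp ζ ^ j = exp (-σ * ζ) * exp ζ ^ (σ + j) := by
      rw [← rpow_natCast, ← exp_mul, ← exp_mul, ← exp_add]; ring_nf
    rw [hsplit, mul_assoc, abs_mul, abs_of_pos (exp_pos _)]
    exact mul_le_mul_of_nonneg_left (hbound j _ hζ) (exp_pos _).le
  rw [iteratedDeriv_comp_exp_eq_sum hu hf k hζ]
  calc _ ≤ ∑ j ∈ range (k + 1),
        (Nat.stirlingSecond k j : ℝ) * |exp ζ ^ j * iteratedDeriv j f (exp ζ)| := by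
        refine (abs_sum_le_sum_abs _ _).trans_eq (sum_congr rfl fun j _ => ?_)
        rw [abs_mul, Nat.abs_cast]
    _ ≤ ∑ j ∈ range (k + 1),
        (Nat.stirlingSecond k j : ℝ) * (exp (-σ * ζ) * (C * d ^ j * j.factorial)) := by
        gcongr with j; exact hterm j
    _ = C * exp (-σ * ζ) *
        ∑ j ∈ range (k + 1), (Nat.stirlingSecond k j : ℝ) * (d ^ j * j.factorial) := by
        rw [mul_sum]; exact sum_congr rfl fun j _ => by ring
    _ ≤ C * exp (-σ * ζ) * ((d + 1) ^ k * k.factorial) := by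
        gcongr; exact sum_range_stirlingSecond_mul_pow_mul_factorial_le hd k
    _ = _ := by ring

theorem stmt17_general (β δ c : ℝ) (hδ : 0 < δ)
    (s : ℝ → ℝ) (hs : ContDiffOn ℝ (⊤ : ℕ∞) s (Set.Ioo 0 δ))
    (C d : ℝ) (hC : 0 ≤ C) (hd : 1 ≤ d)
    (hbound : ∀ k : ℕ, ∀ x ∈ Set.Ioo (0 : ℝ) δ,
      |x ^ (β + (k : ℝ) - 1 / 2) * iteratedDeriv k (fun t => s t - c) x| ≤
        C * d ^ k * Nat.factorial k) :
    ∃ C' : ℝ, 0 < C' ∧ ∃ d' : ℝ, 0 < d' ∧ ∀ k : ℕ, ∀ ζ : ℝ, ζ < Real.log δ →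
      |iteratedDeriv k (fun z => s (Real.exp z) - c) ζ| ≤
        C' * d' ^ k * Nat.factorial k * Real.exp ((1 / 2 - β) * ζ) := by
  refine ⟨C + 1, by linarith, d + 1, by linarith, fun k ζ hζ => ?_⟩
  have hmem : exp ζ ∈ Set.Ioo 0 δ := ⟨exp_pos ζ, (lt_log_iff_exp_lt hδ).mp hζ⟩
  have hweight : ∀ j : ℕ, ∀ x ∈ Set.Ioo (0 : ℝ) δ,
      |x ^ ((β - 1 / 2) + j) * iteratedDeriv j (fun t => s t - c) x| ≤ C * d ^ j * j.factorial :=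
    fun j x hx => by simpa only [add_sub_right_comm] using hbound j x hx
  calc _ ≤ C * (d + 1) ^ k * k.factorial * exp (-(β - 1 / 2) * ζ) :=
        abs_iteratedDeriv_comp_exp_le isOpen_Ioo (hs.sub contDiffOn_const) hC (by linarith)
          hweight k hmem
    _ ≤ (C + 1) * (d + 1) ^ k * k.factorial * exp ((1 / 2 - β) * ζ) := by
        rw [neg_sub]; gcongr; linarith

/-- Gevrey-type bounds with power weights `x^{β+k−1/2}` transform into Gevrey-type bounds
with exponential weight `e^{(1/2−β)ζ}` under the logarithmic substitution `x = e^ζ`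
(the pointwise step behind estimate (2.9)/(A.15)). -/
theorem stmt17 (β δ c : ℝ) (hβ : β ∈ Set.Ioo (0 : ℝ) (1 / 2)) (hδ : 0 < δ)
    (s : ℝ → ℝ) (hs : ContDiffOn ℝ (⊤ : ℕ∞) s (Set.Ioo 0 δ))
    (C d : ℝ) (hC : 0 ≤ C) (hd : 1 ≤ d)
    (hbound : ∀ k : ℕ, ∀ x ∈ Set.Ioo (0 : ℝ) δ,
      |x ^ (β + (k : ℝ) - 1 / 2) * iteratedDeriv k (fun t => s t - c) x| ≤
        C * d ^ k * Nat.factorial k) :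
    ∃ C' : ℝ, 0 < C' ∧ ∃ d' : ℝ, 0 < d' ∧ ∀ k : ℕ, ∀ ζ : ℝ, ζ < Real.log δ →
      |iteratedDeriv k (fun z => s (Real.exp z) - c) ζ| ≤
        C' * d' ^ k * Nat.factorial k * Real.exp ((1 / 2 - β) * ζ) :=
  stmt17_general β δ c hδ s hs C d hC hd hbound
end

section
/- Let β ∈ (0,1) and Z > 0, let D = {(x₁,x₂) ∈ ℝ² : 0 < √(x₁² + x₂²) < Z}, and let p : D → ℝ be a smooth function for which there are constants C ≥ 0 and d ≥ 1 such that for every pair (α₁,α₂) ∈ ℕ² and every x ∈ D, |∂^{α₁+α₂} p / ∂x₁^{α₁}∂x₂^{α₂}(x)| ≤ C d^{α₁+α₂} α₁! α₂! · r(x)^{1 − β − α₁ − α₂}, where r(x) = √(x₁² + x₂²). Define q(τ, θ) := p(e^τ cos θ, e^τ sin θ) for τ < ln Z and θ ∈ ℝ. Then there exist constants C', d' > 0 such that for every pair (α₁,α₂) ∈ ℕ² and every (τ,θ) with τ < ln Z, |∂^{α₁+α₂} q / ∂τ^{α₁}∂θ^{α₂}(τ,θ)| ≤ C' d'^{α₁+α₂}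 α₁! α₂! · e^{(1 − β)τ}. -/
/-- Euclidean norm `r(x) = √(x₁² + x₂²)` on `ℝ²`. -/
noncomputable def rad2 (x : Fin 2 → ℝ) : ℝ := Real.sqrt (x 0 ^ 2 + x 1 ^ 2)

/-!
In log-polar coordinates `∂_τ` and `∂_θ` become the first-order operators `A = x₁∂₁ + x₂∂₂` and
`B = x₁∂₂ − x₂∂₁`, so `∂_τ^a ∂_θ^b q = (A^a B^b p) ∘ Φ`. Call `g` of class `(e, K, L, n)` if
`|D^{(a,b)} g| ≤ K L^{a+b} (a+b+n)! r^{e−a−b}`. For `L ≥ 1`, each operator `xⱼ ∂ᵢ` maps class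
`(e, K, L, n)` into class `(e, 2LK, L, n+1)`: `∂ᵢ` lowers the weight exponent by one, the factor
`xⱼ`, of size at most `r`, restores it, and the Leibniz terms `[D^{(a,b)}, xⱼ]` are absorbed by the
extra factorial. After `a + b` steps, order zero gives `|A^a B^b p| ≤ C (4d)^{a+b} (a+b)! r^{1−β}`,
and `r = e^τ`.
-/

open Real Set Function
open scoped ContDiff

variable {s : Set (Fin 2 → ℝ)} {f g : (Fin 2 → ℝ) → ℝ} {x : Fin 2 → ℝ}

theorem contDiffOn_pd2 (hs : IsOpen s) (hf : ContDiffOn ℝ ∞ f s) (i : Fin 2) :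
    ContDiffOn ℝ ∞ (pd2 i f) s :=
  (hf.fderiv_of_isOpen hs le_rfl).clm_apply contDiffOn_const

theorem ContDiffOn.differentiableAt_of_isOpen (hs : IsOpen s) (hf : ContDiffOn ℝ ∞ f s)
    (hx : x ∈ s) : DifferentiableAt ℝ f x :=
  (hf.differentiableOn (by simp) x hx).differentiableAt (hs.mem_nhds hx)

theorem eqOn_pd2 (hs : IsOpen s) (h : EqOn f g s) (i : Fin 2) :
    EqOn (pd2 i f) (pd2 i g) s := fun x hx => by
  simp only [pd2, (Filter.eventuallyEq_of_mem (hs.mem_nhds hx) h).fderiv_eq]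

theorem eqOn_iterate_pd2 (hs : IsOpen s) (h : EqOn f g s) (i : Fin 2) (n : ℕ) :
    EqOn ((pd2 i)^[n] f) ((pd2 i)^[n] g) s := by
  induction n with
  | zero => exact h
  | succ n ih => simpa only [iterate_succ_apply'] using eqOn_pd2 hs ih i

theorem pd2_add (hf : DifferentiableAt ℝ f x) (hg : DifferentiableAt ℝ g x) (i : Fin 2) :
    pd2 i (fun y => f y + g y) x = pd2 i f x + pd2 i g x := by
  simp [pd2, fderiv_fun_add hf hg]

theorem pd2_sub (hf : DifferentiableAt ℝ f x) (hg : DifferentiableAt ℝ g x) (i : Fin 2) :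
    pd2 i (fun y => f y - g y) x = pd2 i f x - pd2 i g x := by
  simp [pd2, fderiv_fun_sub hf hg]

theorem pd2_const_mul (hf : DifferentiableAt ℝ f x) (c : ℝ) (i : Fin 2) :
    pd2 i (fun y => c * f y) x = c * pd2 i f x := by
  simp [pd2, fderiv_const_mul hf c]

theorem pd2_coord_mul (hf : DifferentiableAt ℝ f x) (i j : Fin 2) :
    pd2 i (fun y => y j * f y) x = (Pi.single i 1 : Fin 2 → ℝ) j * f x + x j * pd2 i f x := by
  simp only [pd2, fderiv_fun_mul (differentiableAt_apply j x) hf, (hasFDerivAt_apply j x).fderiv,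
    add_apply, smul_apply, smul_eq_mul, ContinuousLinearMap.proj_apply]
  ring

theorem pd2_comm_s18 (hs : IsOpen s) (hf : ContDiffOn ℝ ∞ f s) (hx : x ∈ s) (i j : Fin 2) :
    pd2 i (pd2 j f) x = pd2 j (pd2 i f) x := by
  have hfx : ContDiffAt ℝ ∞ f x := hf.contDiffAt (hs.mem_nhds hx)
  have hd2 : DifferentiableAt ℝ (fderiv ℝ f) x :=
    (hfx.fderiv_right (m := ∞) le_rfl).differentiableAt (by simp)
  have key (k l : Fin 2) :
      pd2 k (pd2 l f) x = fderiv ℝ (fderiv ℝ f) x (Pi.single k 1) (Pi.single l 1) := by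
    change fderiv ℝ (fun y => fderiv ℝ f y (Pi.single l 1)) x (Pi.single k 1) = _
    simp [fderiv_clm_apply hd2 (differentiableAt_const _)]
  rw [key, key]
  refine hfx.isSymmSndFDerivAt ?_ _ _
  rw [minSmoothness_of_isRCLikeNormedField]
  exact WithTop.coe_le_coe.mpr le_top

theorem fderiv_apply_eq_pd2 (w : Fin 2 → ℝ) :
    fderiv ℝ f x w = w 0 * pd2 0 f x + w 1 * pd2 1 f x := by
  conv_lhs => rw [show w = w 0 • Pi.single 0 1 + w 1 • Pi.single 1 1 by
    ext k; fin_cases k <;> simp]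
  simp [pd2]

theorem pd2_comp {Φ : (Fin 2 → ℝ) → Fin 2 → ℝ} {y : Fin 2 → ℝ}
    (hf : DifferentiableAt ℝ f (Φ y)) (hΦ : DifferentiableAt ℝ Φ y) (i : Fin 2) :
    pd2 i (fun z => f (Φ z)) y
      = pd2 i (fun z => Φ z 0) y * pd2 0 f (Φ y) + pd2 i (fun z => Φ z 1) y * pd2 1 f (Φ y) := by
  rw [pd2, fderiv_fun_comp y hf hΦ, ContinuousLinearMap.comp_apply, fderiv_apply_eq_pd2]
  simp [pd2, fderiv_apply hΦ]

theorem contDiffOn_iterate_pd2 (hs : IsOpen s) (hf : ContDiffOn ℝ ∞ f s) (i : Fin 2) (n : ℕ) :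
    ContDiffOn ℝ ∞ ((pd2 i)^[n] f) s :=
  (MapsTo.iterate (f := pd2 i) (s := {g | ContDiffOn ℝ ∞ g s})
    (fun _ hg => contDiffOn_pd2 hs hg i) n) hf

theorem differentiableAt_iterate_pd2 (hs : IsOpen s) (hf : ContDiffOn ℝ ∞ f s) (i : Fin 2)
    (n : ℕ) (hx : x ∈ s) : DifferentiableAt ℝ ((pd2 i)^[n] f) x :=
  (contDiffOn_iterate_pd2 hs hf i n).differentiableAt_of_isOpen hs hx

theorem iterate_pd2_add (hs : IsOpen s) (hf : ContDiffOn ℝ ∞ f s) (hg : ContDiffOn ℝ ∞ g s)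
    (i : Fin 2) (n : ℕ) :
    EqOn ((pd2 i)^[n] (fun y => f y + g y)) (fun y => (pd2 i)^[n] f y + (pd2 i)^[n] g y) s := by
  induction n with
  | zero => exact fun _ _ => rfl
  | succ n ih =>
    intro x hx
    simp only [iterate_succ_apply']
    rw [eqOn_pd2 hs ih i hx, pd2_add (differentiableAt_iterate_pd2 hs hf i n hx)
      (differentiableAt_iterate_pd2 hs hg i n hx)]

theorem iterate_pd2_sub (hs : IsOpen s) (hf : ContDiffOn ℝ ∞ f s) (hg : ContDiffOn ℝ ∞ g s)
    (i : Fin 2) (n : ℕ) :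
    EqOn ((pd2 i)^[n] (fun y => f y - g y)) (fun y => (pd2 i)^[n] f y - (pd2 i)^[n] g y) s := by
  induction n with
  | zero => exact fun _ _ => rfl
  | succ n ih =>
    intro x hx
    simp only [iterate_succ_apply']
    rw [eqOn_pd2 hs ih i hx, pd2_sub (differentiableAt_iterate_pd2 hs hf i n hx)
      (differentiableAt_iterate_pd2 hs hg i n hx)]

theorem iterate_pd2_const_mul (hs : IsOpen s) (hf : ContDiffOn ℝ ∞ f s) (c : ℝ) (i : Fin 2)
    (n : ℕ) : EqOn ((pd2 i)^[n] (fun y => c * f y)) (fun y => c * (pd2 i)^[n] f y) s := by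
  induction n with
  | zero => exact fun _ _ => rfl
  | succ n ih =>
    intro x hx
    simp only [iterate_succ_apply']
    rw [eqOn_pd2 hs ih i hx, pd2_const_mul (differentiableAt_iterate_pd2 hs hf i n hx)]

theorem iterate_pd2_coord_mul (hs : IsOpen s) (hf : ContDiffOn ℝ ∞ f s) (i j : Fin 2) (n : ℕ) :
    EqOn ((pd2 i)^[n] (fun y => y j * f y))
      (fun y => y j * (pd2 i)^[n] f y
        + n * (Pi.single i 1 : Fin 2 → ℝ) j * (pd2 i)^[n - 1] f y) s := by
  induction n with
  | zero => exact fun _ _ => by simp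
  | succ n ih =>
    intro x hx
    have hF := differentiableAt_iterate_pd2 hs hf i n hx
    have hG := differentiableAt_iterate_pd2 hs hf i (n - 1) hx
    have hlower : n * pd2 i ((pd2 i)^[n - 1] f) x = n * (pd2 i)^[n] f x := by
      cases n <;> simp [← iterate_succ_apply' (pd2 i)]
    simp only [iterate_succ_apply', Nat.add_sub_cancel]
    rw [eqOn_pd2 hs ih i hx, pd2_add ((differentiableAt_apply j x).fun_mul hF) (hG.const_mul _),
      pd2_coord_mul hF, pd2_const_mul hG]
    push_cast
    linear_combination (Pi.single i 1 : Fin 2 → ℝ) j * hlower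

theorem iterate_pd2_pd2 (hs : IsOpen s) (hf : ContDiffOn ℝ ∞ f s) (i j : Fin 2) (n : ℕ) :
    EqOn ((pd2 i)^[n] (pd2 j f)) (pd2 j ((pd2 i)^[n] f)) s := by
  induction n with
  | zero => exact fun _ _ => rfl
  | succ n ih =>
    intro x hx
    simp only [iterate_succ_apply']
    rw [eqOn_pd2 hs ih i hx, pd2_comm_s18 hs (contDiffOn_iterate_pd2 hs hf i n) hx]

theorem eqOn_Dop2_add (hs : IsOpen s) (hf : ContDiffOn ℝ ∞ f s) (hg : ContDiffOn ℝ ∞ g s)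
    (a b : ℕ) : EqOn (Dop2 a b (fun y => f y + g y)) (fun y => Dop2 a b f y + Dop2 a b g y) s :=
  fun _ hx => by
    rw [Dop2, eqOn_iterate_pd2 hs (iterate_pd2_add hs hf hg 1 b) 0 a hx,
      iterate_pd2_add hs (contDiffOn_iterate_pd2 hs hf 1 b) (contDiffOn_iterate_pd2 hs hg 1 b) 0 a
        hx]
    rfl

theorem eqOn_Dop2_sub (hs : IsOpen s) (hf : ContDiffOn ℝ ∞ f s) (hg : ContDiffOn ℝ ∞ g s)
    (a b : ℕ) : EqOn (Dop2 a b (fun y => f y - g y)) (fun y => Dop2 a b f y - Dop2 a b g y) s :=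
  fun _ hx => by
    rw [Dop2, eqOn_iterate_pd2 hs (iterate_pd2_sub hs hf hg 1 b) 0 a hx,
      iterate_pd2_sub hs (contDiffOn_iterate_pd2 hs hf 1 b) (contDiffOn_iterate_pd2 hs hg 1 b) 0 a
        hx]
    rfl

theorem eqOn_Dop2_coord_mul (hs : IsOpen s) (hf : ContDiffOn ℝ ∞ f s) (j : Fin 2) (a b : ℕ) :
    EqOn (Dop2 a b (fun y => y j * f y))
      (fun y => y j * Dop2 a b f y + a * (Pi.single 0 1 : Fin 2 → ℝ) j * Dop2 (a - 1) b f y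
        + b * (Pi.single 1 1 : Fin 2 → ℝ) j * Dop2 a (b - 1) f y) s := fun x hx => by
  have hH := contDiffOn_iterate_pd2 hs hf 1 b
  have hH' := contDiffOn_iterate_pd2 hs hf 1 (b - 1)
  rw [Dop2, eqOn_iterate_pd2 hs (iterate_pd2_coord_mul hs hf 1 j b) 0 a hx,
    iterate_pd2_add hs ((contDiff_apply ℝ ℝ j).contDiffOn.mul hH) (contDiffOn_const.mul hH') 0 a hx]
  dsimp only
  rw [iterate_pd2_coord_mul hs hH 0 j a hx, iterate_pd2_const_mul hs hH' _ 0 a hx]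
  rfl

theorem eqOn_Dop2_pd2_zero (hs : IsOpen s) (hf : ContDiffOn ℝ ∞ f s) (a b : ℕ) :
    EqOn (Dop2 a b (pd2 0 f)) (Dop2 (a + 1) b f) s :=
  fun _ hx => eqOn_iterate_pd2 hs (iterate_pd2_pd2 hs hf 1 0 b) 0 a hx

theorem Dop2_pd2_one (a b : ℕ) : Dop2 a b (pd2 1 f) = Dop2 a (b + 1) f := rfl

noncomputable def eulerDeriv (f : (Fin 2 → ℝ) → ℝ) : (Fin 2 → ℝ) → ℝ :=
  fun x => x 0 * pd2 0 f x + x 1 * pd2 1 f x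

noncomputable def angularDeriv (f : (Fin 2 → ℝ) → ℝ) : (Fin 2 → ℝ) → ℝ :=
  fun x => x 0 * pd2 1 f x - x 1 * pd2 0 f x

theorem contDiffOn_eulerDeriv (hs : IsOpen s) (hf : ContDiffOn ℝ ∞ f s) :
    ContDiffOn ℝ ∞ (eulerDeriv f) s :=
  ((contDiff_apply ℝ ℝ 0).contDiffOn.mul (contDiffOn_pd2 hs hf 0)).add
    ((contDiff_apply ℝ ℝ 1).contDiffOn.mul (contDiffOn_pd2 hs hf 1))

theorem contDiffOn_angularDeriv (hs : IsOpen s) (hf : ContDiffOn ℝ ∞ f s) :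
    ContDiffOn ℝ ∞ (angularDeriv f) s :=
  ((contDiff_apply ℝ ℝ 0).contDiffOn.mul (contDiffOn_pd2 hs hf 1)).sub
    ((contDiff_apply ℝ ℝ 1).contDiffOn.mul (contDiffOn_pd2 hs hf 0))

noncomputable def logPolar (y : Fin 2 → ℝ) : Fin 2 → ℝ :=
  ![exp (y 0) * cos (y 1), exp (y 0) * sin (y 1)]

theorem rad2_logPolar (y : Fin 2 → ℝ) : rad2 (logPolar y) = exp (y 0) := by
  rw [rad2, ← Real.sqrt_sq (exp_pos (y 0)).le]
  congr 1
  simp only [logPolar, Matrix.cons_val_zero, Matrix.cons_val_one]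
  linear_combination exp (y 0) ^ 2 * sin_sq_add_cos_sq (y 1)

theorem pd2_comp_logPolar {y : Fin 2 → ℝ} (hf : DifferentiableAt ℝ f (logPolar y)) :
    pd2 0 (fun z => f (logPolar z)) y = eulerDeriv f (logPolar y) ∧
      pd2 1 (fun z => f (logPolar z)) y = angularDeriv f (logPolar y) := by
  have hlogPolar : DifferentiableAt ℝ logPolar y := by
    refine differentiableAt_pi.2 fun k => ?_
    fin_cases k <;> simp [logPolar] <;> fun_prop
  have hcos : HasFDerivAt (fun z : Fin 2 → ℝ => exp (z 0) * cos (z 1)) _ y :=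
    (hasFDerivAt_apply 0 y).exp.mul (hasFDerivAt_apply 1 y).cos
  have hsin : HasFDerivAt (fun z : Fin 2 → ℝ => exp (z 0) * sin (z 1)) _ y :=
    (hasFDerivAt_apply 0 y).exp.mul (hasFDerivAt_apply 1 y).sin
  simp only [pd2_comp hf hlogPolar]
  simp only [pd2, logPolar, Matrix.cons_val_zero, Matrix.cons_val_one, Matrix.cons_val_fin_one,
    hcos.fderiv, hsin.fderiv, eulerDeriv, angularDeriv, add_apply, smul_apply, smul_eq_mul,
    ContinuousLinearMap.proj_apply, Pi.single_eq_same, Pi.single_eq_of_ne one_ne_zero,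
    Pi.single_eq_of_ne zero_ne_one]
  constructor <;> ring

theorem eqOn_iterate_pd2_comp {t : Set (Fin 2 → ℝ)} (ht : IsOpen t) {Φ : (Fin 2 → ℝ) → Fin 2 → ℝ}
    {T : ((Fin 2 → ℝ) → ℝ) → (Fin 2 → ℝ) → ℝ} {i : Fin 2}
    (hTs : MapsTo T {g | ContDiffOn ℝ ∞ g s} {g | ContDiffOn ℝ ∞ g s})
    (hT : ∀ g, ContDiffOn ℝ ∞ g s → ∀ y ∈ t, pd2 i (fun z => g (Φ z)) y = T g (Φ y))
    (hf : ContDiffOn ℝ ∞ f s) (n : ℕ) :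
    EqOn ((pd2 i)^[n] (fun z => f (Φ z))) (fun z => (T^[n] f) (Φ z)) t := by
  induction n with
  | zero => exact fun _ _ => rfl
  | succ n ih =>
    intro y hy
    simp only [iterate_succ_apply']
    rw [eqOn_pd2 ht ih i hy, hT _ (hTs.iterate n hf) y hy]

theorem eqOn_Dop2_comp_logPolar (hs : IsOpen s) {t : Set (Fin 2 → ℝ)} (ht : IsOpen t)
    (hts : MapsTo logPolar t s) (hf : ContDiffOn ℝ ∞ f s) (a b : ℕ) :
    EqOn (Dop2 a b (fun z => f (logPolar z)))
      (fun z => (eulerDeriv^[a] (angularDeriv^[b] f)) (logPolar z)) t := fun y hy => by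
  have hdiff {g} (hg : ContDiffOn ℝ ∞ g s) {y} (hy : y ∈ t) : DifferentiableAt ℝ g (logPolar y) :=
    hg.differentiableAt_of_isOpen hs (hts hy)
  have hA : MapsTo angularDeriv {g | ContDiffOn ℝ ∞ g s} {g | ContDiffOn ℝ ∞ g s} :=
    fun _ hg => contDiffOn_angularDeriv hs hg
  rw [Dop2, eqOn_iterate_pd2 ht (eqOn_iterate_pd2_comp ht hA
    (fun _ hg _ hy => (pd2_comp_logPolar (hdiff hg hy)).2) hf b) 0 a hy]
  exact eqOn_iterate_pd2_comp ht (fun _ hg => contDiffOn_eulerDeriv hs hg)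
    (fun _ hg _ hy => (pd2_comp_logPolar (hdiff hg hy)).1) (hA.iterate b hf) a hy

theorem rad2_nonneg (x : Fin 2 → ℝ) : 0 ≤ rad2 x := Real.sqrt_nonneg _

theorem abs_apply_le_rad2 (x : Fin 2 → ℝ) (j : Fin 2) : |x j| ≤ rad2 x := by
  rw [rad2, ← Real.sqrt_sq_eq_abs]
  apply Real.sqrt_le_sqrt
  fin_cases j <;> simp [sq_nonneg]

theorem mul_rpow_sub_one_le {r : ℝ} (hr : 0 ≤ r) (E : ℝ) : r * r ^ (E - 1) ≤ r ^ E := by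
  rcases hr.eq_or_lt with rfl | hr
  · simpa using Real.rpow_nonneg le_rfl E
  · rw [Real.rpow_sub_one hr.ne', mul_div_cancel₀ _ hr.ne']

theorem mul_pow_pred_mul_factorial_le {L : ℝ} (hL : 1 ≤ L) (m n : ℕ) :
    m * L ^ (m - 1) * ((m - 1 + n).factorial : ℝ) ≤ L ^ m * (m + n).factorial := by
  rcases m with _ | m
  · simp
  · have hfact : ((m + 1 : ℕ) : ℝ) * (m + n).factorial ≤ (m + 1 + n).factorial := by
      rw [show m + 1 + n = m + n + 1 by omega, Nat.factorial_succ]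
      exact_mod_cast Nat.mul_le_mul_right _ (by omega)
    calc ((m + 1 : ℕ) : ℝ) * L ^ m * (m + n).factorial
        = L ^ m * (((m + 1 : ℕ) : ℝ) * (m + n).factorial) := by ring
      _ ≤ L ^ (m + 1) * (m + 1 + n).factorial :=
        mul_le_mul (pow_le_pow_right₀ hL m.le_succ) hfact (by positivity) (by positivity)

theorem factorial_add_le_two_pow_mul (a b : ℕ) :
    (a + b).factorial ≤ 2 ^ (a + b) * (a.factorial * b.factorial) := by
  rw [← Nat.add_choose_mul_factorial_mul_factorial a b, mul_assoc]
  exact Nat.mul_le_mul_right _ (Nat.choose_le_two_pow _ _)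

variable {e K L : ℝ} {n : ℕ}

/-- The shift `n` absorbs the factorial growth caused by applying `n` operators `xⱼ ∂ᵢ`. -/
def GevreyBoundOn (s : Set (Fin 2 → ℝ)) (e K L : ℝ) (n : ℕ) (g : (Fin 2 → ℝ) → ℝ) : Prop :=
  ContDiffOn ℝ ∞ g s ∧ ∀ a b : ℕ, ∀ x ∈ s,
    |Dop2 a b g x| ≤ K * L ^ (a + b) * (a + b + n).factorial * rad2 x ^ (e - a - b)

theorem GevreyBoundOn.pd2 (hs : IsOpen s) (h : GevreyBoundOn s e K L n g) (i : Fin 2) :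
    GevreyBoundOn s (e - 1) (L * K) L (n + 1) (pd2 i g) := by
  refine ⟨contDiffOn_pd2 hs h.1 i, fun a b x hx => ?_⟩
  match i with
  | 0 =>
    rw [eqOn_Dop2_pd2_zero hs h.1 a b hx]
    convert h.2 (a + 1) b x hx using 2
    · rw [show a + 1 + b + n = a + b + (n + 1) by ring]; ring
    · push_cast; ring_nf
  | 1 =>
    rw [Dop2_pd2_one]
    convert h.2 a (b + 1) x hx using 2
    · rw [show a + (b + 1) + n = a + b + (n + 1) by ring]; ring
    · push_cast; ring_nf

theorem GevreyBoundOn.coord_mul (hs : IsOpen s) (hK : 0 ≤ K) (hL : 1 ≤ L)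
    (h : GevreyBoundOn s (e - 1) K L n g) (j : Fin 2) :
    GevreyBoundOn s e (2 * K) L n (fun y => y j * g y) := by
  refine ⟨(contDiff_apply ℝ ℝ j).contDiffOn.mul h.1, fun a b x hx => ?_⟩
  rw [eqOn_Dop2_coord_mul hs h.1 j a b hx]
  have hr := rad2_nonneg x
  have hL0 : 0 ≤ L := zero_le_one.trans hL
  set R := K * L ^ (a + b) * ((a + b + n).factorial : ℝ) * rad2 x ^ (e - a - b)
  set Y := K * L ^ (a + b - 1) * ((a + b - 1 + n).factorial : ℝ) * rad2 x ^ (e - a - b)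
  have hY : 0 ≤ Y := by positivity
  have hleading : |x j * Dop2 a b g x| ≤ R := by
    have hD := h.2 a b x hx
    rw [show e - 1 - a - b = (e - a - b) - 1 by ring] at hD
    calc |x j * Dop2 a b g x|
        ≤ rad2 x * (K * L ^ (a + b) * (a + b + n).factorial * rad2 x ^ (e - a - b - 1)) := by
          rw [abs_mul]; exact mul_le_mul (abs_apply_le_rad2 x j) hD (abs_nonneg _) hr
      _ = K * L ^ (a + b) * (a + b + n).factorial * (rad2 x * rad2 x ^ (e - a - b - 1)) := by ring
      _ ≤ R := mul_le_mul_of_nonneg_left (mul_rpow_sub_one_le hr _) (by positivity)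
  have hlower (c a' b' : ℕ) (i : Fin 2) (hc : c ≠ 0 → a' + b' + 1 = a + b) :
      |c * (Pi.single i 1 : Fin 2 → ℝ) j * Dop2 a' b' g x| ≤ c * Y := by
    rcases eq_or_ne c 0 with rfl | hc0
    · simp
    have hab := hc hc0
    have hD := h.2 a' b' x hx
    have hab' : (a' + b' + 1 : ℝ) = a + b := by exact_mod_cast hab
    rw [show a' + b' = a + b - 1 by omega, show e - 1 - a' - b' = e - a - b by linarith] at hD
    have hδ : |(Pi.single i 1 : Fin 2 → ℝ) j| ≤ 1 := by
      rcases eq_or_ne j i with rfl | hji <;> simp [*]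
    rw [abs_mul, abs_mul, Nat.abs_cast]
    calc (c : ℝ) * |(Pi.single i 1 : Fin 2 → ℝ) j| * |Dop2 a' b' g x| ≤ c * 1 * Y := by gcongr
      _ = c * Y := by ring
  have hsum : ((a + b : ℕ) : ℝ) * Y ≤ R := by
    calc ((a + b : ℕ) : ℝ) * Y
        = K * rad2 x ^ (e - a - b)
          * ((a + b : ℕ) * L ^ (a + b - 1) * (a + b - 1 + n).factorial) := by ring
      _ ≤ K * rad2 x ^ (e - a - b) * (L ^ (a + b) * (a + b + n).factorial) :=
          mul_le_mul_of_nonneg_left (mul_pow_pred_mul_factorial_le hL _ _) (by positivity)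
      _ = R := by ring
  have h2 := hlower a (a - 1) b 0 (by omega)
  have h3 := hlower b a (b - 1) 1 (by omega)
  push_cast at hsum
  calc _ ≤ |x j * Dop2 a b g x| + |a * (Pi.single 0 1 : Fin 2 → ℝ) j * Dop2 (a - 1) b g x|
        + |b * (Pi.single 1 1 : Fin 2 → ℝ) j * Dop2 a (b - 1) g x| := abs_add_three _ _ _
    _ ≤ 2 * K * L ^ (a + b) * (a + b + n).factorial * rad2 x ^ (e - a - b) := by linarith

theorem GevreyBoundOn.add (hs : IsOpen s) {K₁ K₂ : ℝ} (hf : GevreyBoundOn s e K₁ L n f)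
    (hg : GevreyBoundOn s e K₂ L n g) :
    GevreyBoundOn s e (K₁ + K₂) L n (fun y => f y + g y) := by
  refine ⟨hf.1.add hg.1, fun a b x hx => ?_⟩
  rw [eqOn_Dop2_add hs hf.1 hg.1 a b hx]
  linarith [abs_add_le (Dop2 a b f x) (Dop2 a b g x), hf.2 a b x hx, hg.2 a b x hx]

theorem GevreyBoundOn.sub (hs : IsOpen s) {K₁ K₂ : ℝ} (hf : GevreyBoundOn s e K₁ L n f)
    (hg : GevreyBoundOn s e K₂ L n g) :
    GevreyBoundOn s e (K₁ + K₂) L n (fun y => f y - g y) := by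
  refine ⟨hf.1.sub hg.1, fun a b x hx => ?_⟩
  rw [eqOn_Dop2_sub hs hf.1 hg.1 a b hx]
  linarith [abs_sub (Dop2 a b f x) (Dop2 a b g x), hf.2 a b x hx, hg.2 a b x hx]

theorem GevreyBoundOn.eulerDeriv (hs : IsOpen s) (hK : 0 ≤ K) (hL : 1 ≤ L)
    (h : GevreyBoundOn s e K L n g) : GevreyBoundOn s e (4 * L * K) L (n + 1) (eulerDeriv g) := by
  have hLK : 0 ≤ L * K := by positivity
  rw [show 4 * L * K = 2 * (L * K) + 2 * (L * K) by ring]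
  exact ((h.pd2 hs 0).coord_mul hs hLK hL 0).add hs ((h.pd2 hs 1).coord_mul hs hLK hL 1)

theorem GevreyBoundOn.angularDeriv (hs : IsOpen s) (hK : 0 ≤ K) (hL : 1 ≤ L)
    (h : GevreyBoundOn s e K L n g) : GevreyBoundOn s e (4 * L * K) L (n + 1) (angularDeriv g) := by
  have hLK : 0 ≤ L * K := by positivity
  rw [show 4 * L * K = 2 * (L * K) + 2 * (L * K) by ring]
  exact ((h.pd2 hs 1).coord_mul hs hLK hL 0).sub hs ((h.pd2 hs 0).coord_mul hs hLK hL 1)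

theorem GevreyBoundOn.iterate {T : ((Fin 2 → ℝ) → ℝ) → (Fin 2 → ℝ) → ℝ} {M : ℝ} (hM : 0 ≤ M)
    (hT : ∀ {K n g}, 0 ≤ K → GevreyBoundOn s e K L n g → GevreyBoundOn s e (M * K) L (n + 1) (T g))
    (hK : 0 ≤ K) (h : GevreyBoundOn s e K L n g) (k : ℕ) :
    GevreyBoundOn s e (M ^ k * K) L (n + k) (T^[k] g) := by
  induction k with
  | zero => simpa using h
  | succ k ih =>
    rw [iterate_succ_apply', pow_succ', mul_assoc]
    exact hT (by positivity) ih

theorem GevreyBoundOn.abs_le (h : GevreyBoundOn s e K L n g) (hx : x ∈ s) :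
    |g x| ≤ K * n.factorial * rad2 x ^ e := by
  simpa [Dop2] using h.2 0 0 x hx

theorem GevreyBoundOn.of_factorial_mul_factorial (hf : ContDiffOn ℝ ∞ f s) (hK : 0 ≤ K)
    (hL : 0 ≤ L) (h : ∀ a b : ℕ, ∀ x ∈ s, |Dop2 a b f x| ≤
      K * L ^ (a + b) * (a.factorial * b.factorial) * rad2 x ^ (e - a - b)) :
    GevreyBoundOn s e K L 0 f := by
  refine ⟨hf, fun a b x hx => (h a b x hx).trans ?_⟩
  have hfact : (a.factorial * b.factorial : ℝ) ≤ (a + b + 0).factorial := by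
    exact_mod_cast Nat.le_of_dvd (Nat.factorial_pos _)
      (a.factorial_mul_factorial_dvd_factorial_add b)
  have := Real.rpow_nonneg (rad2_nonneg x) (e - a - b)
  gcongr

theorem abs_iterate_eulerDeriv_angularDeriv_le (hs : IsOpen s) (hK : 0 ≤ K)
    (hL : 1 ≤ L) (h : GevreyBoundOn s e K L 0 g) (a b : ℕ) (hx : x ∈ s) :
    |(eulerDeriv^[a] (angularDeriv^[b] g)) x|
      ≤ K * (8 * L) ^ (a + b) * (a.factorial * b.factorial) * rad2 x ^ e := by
  have hM : 0 ≤ 4 * L := by linarith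
  have hab := ((h.iterate hM (fun hK h => h.angularDeriv hs hK hL) hK b).iterate hM
    (fun hK h => h.eulerDeriv hs hK hL) (by positivity) a).abs_le hx
  rw [zero_add, add_comm b a] at hab
  have hfact : ((a + b).factorial : ℝ) ≤ 2 ^ (a + b) * (a.factorial * b.factorial) := by
    exact_mod_cast factorial_add_le_two_pow_mul a b
  have := Real.rpow_nonneg (rad2_nonneg x) e
  calc _ ≤ _ := hab
    _ = K * (4 * L) ^ (a + b) * (a + b).factorial * rad2 x ^ e := by ring
    _ ≤ K * (4 * L) ^ (a + b) * (2 ^ (a + b) * (a.factorial * b.factorial)) * rad2 x ^ e := by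
      gcongr
    _ = K * (8 * L) ^ (a + b) * (a.factorial * b.factorial) * rad2 x ^ e := by
      rw [show 8 * L = 2 * (4 * L) by ring, mul_pow 2 (4 * L)]; ring

theorem stmt18_general (β Z : ℝ) (hZ : 0 < Z)
    (p : (Fin 2 → ℝ) → ℝ)
    (hp : ContDiffOn ℝ (⊤ : ℕ∞) p {x | 0 < rad2 x ∧ rad2 x < Z})
    (C d : ℝ) (hC : 0 ≤ C) (hd : 1 ≤ d)
    (hbound : ∀ a b : ℕ, ∀ x : Fin 2 → ℝ, 0 < rad2 x → rad2 x < Z →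
      |Dop2 a b p x| ≤ C * d ^ (a + b) * (Nat.factorial a * Nat.factorial b) *
        rad2 x ^ (1 - β - (a : ℝ) - (b : ℝ)))
    (q : (Fin 2 → ℝ) → ℝ)
    (hq : q = fun y => p ![Real.exp (y 0) * Real.cos (y 1), Real.exp (y 0) * Real.sin (y 1)]) :
    ∃ C' : ℝ, 0 < C' ∧ ∃ d' : ℝ, 0 < d' ∧ ∀ a b : ℕ, ∀ y : Fin 2 → ℝ, y 0 < Real.log Z →
      |Dop2 a b q y| ≤ C' * d' ^ (a + b) * (Nat.factorial a * Nat.factorial b) *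
        Real.exp ((1 - β) * y 0) := by
  have hrad : Continuous rad2 := by unfold rad2; fun_prop
  have hs : IsOpen {x : Fin 2 → ℝ | 0 < rad2 x ∧ rad2 x < Z} :=
    (isOpen_lt continuous_const hrad).inter (isOpen_lt hrad continuous_const)
  have ht : IsOpen {y : Fin 2 → ℝ | y 0 < log Z} := isOpen_lt (continuous_apply 0) continuous_const
  have hts : MapsTo logPolar {y | y 0 < log Z} {x | 0 < rad2 x ∧ rad2 x < Z} := fun y hy => by
    rw [mem_ofPred_eq, rad2_logPolar]
    exact ⟨exp_pos _, (lt_log_iff_exp_lt hZ).1 hy⟩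
  have hp₀ : GevreyBoundOn {x | 0 < rad2 x ∧ rad2 x < Z} (1 - β) C d 0 p :=
    .of_factorial_mul_factorial hp hC (by linarith) fun a b x hx => hbound a b x hx.1 hx.2
  refine ⟨C + 1, by linarith, 8 * d, by linarith, fun a b y hy => ?_⟩
  rw [show q = fun z => p (logPolar z) from hq, eqOn_Dop2_comp_logPolar hs ht hts hp a b hy]
  calc _ ≤ C * (8 * d) ^ (a + b) * (a.factorial * b.factorial) * rad2 (logPolar y) ^ (1 - β) :=
        abs_iterate_eulerDeriv_angularDeriv_le hs hC hd hp₀ a b (hts hy)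
    _ = C * (8 * d) ^ (a + b) * (a.factorial * b.factorial) * exp ((1 - β) * y 0) := by
        rw [rad2_logPolar, ← exp_mul, mul_comm (y 0)]
    _ ≤ (C + 1) * (8 * d) ^ (a + b) * (a.factorial * b.factorial) * exp ((1 - β) * y 0) := by
        gcongr; linarith

/-- Derivative-transfer estimate ((A.13) ⟹ (A.14)): Gevrey-type bounds with radial weight
`r^{1−β−α₁−α₂}` transform into Gevrey bounds with factor `e^{(1−β)τ}` in log-polar
coordinates `(τ,θ)`, `τ = ln r`. -/
theorem stmt18 (β Z : ℝ) (hβ : β ∈ Set.Ioo (0 : ℝ) 1) (hZ : 0 < Z)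
    (p : (Fin 2 → ℝ) → ℝ)
    (hp : ContDiffOn ℝ (⊤ : ℕ∞) p {x | 0 < rad2 x ∧ rad2 x < Z})
    (C d : ℝ) (hC : 0 ≤ C) (hd : 1 ≤ d)
    (hbound : ∀ a b : ℕ, ∀ x : Fin 2 → ℝ, 0 < rad2 x → rad2 x < Z →
      |Dop2 a b p x| ≤ C * d ^ (a + b) * (Nat.factorial a * Nat.factorial b) *
        rad2 x ^ (1 - β - (a : ℝ) - (b : ℝ)))
    (q : (Fin 2 → ℝ) → ℝ)
    (hq : q = fun y => p ![Real.exp (y 0) * Real.cos (y 1), Real.exp (y 0) * Real.sin (y 1)]) :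
    ∃ C' : ℝ, 0 < C' ∧ ∃ d' : ℝ, 0 < d' ∧ ∀ a b : ℕ, ∀ y : Fin 2 → ℝ, y 0 < Real.log Z →
      |Dop2 a b q y| ≤ C' * d' ^ (a + b) * (Nat.factorial a * Nat.factorial b) *
        Real.exp ((1 - β) * y 0) :=
  stmt18_general β Z hZ p hp C d hC hd hbound q hq
end
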